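/- arXiv:0912.4651 — 6 statements merged into one kernel-verified Lean document; each statement's English description precedes it below -/
import Mathlib

section
/- Let (A, m) be a one-dimensional Cohen-Macaulay local ring with infinite residue field and let xA be a minimal reduction of m with reduction number r. Then for every n ≥ r, the minimal number of generators μ(m^n) equals the multiplicity e of A, and for every n < r one has μ(m^n) = e − λ(m^{n+1}/x m^n) < e. -/
open IsLocalRing Ideal Submodule
open Function

/-- Length of a module: the Krull dimension of its submodule lattice. -/
noncomputable def plen (A M : Type*) [CommRing A] [AddCommGroup M] [Module A M] : ℕ∞ :=
  WithBot.unbotD 0 (Order.krullDim (Submodule A M))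

/-- `λ(I/J)`: the length of the `A`-module `I/(I ⊓ J)`. -/
noncomputable def lenQ {A : Type*} [CommRing A] (I J : Ideal A) : ℕ∞ :=
  plen A (↥I ⧸ (Submodule.comap (Submodule.subtype I) J))

/-- relative length `λ(M/(M ⊓ N))` for submodules of an algebra -/
noncomputable def slen {A Q : Type*} [CommRing A] [CommRing Q] [Algebra A Q]
    (M N : Submodule A Q) : ℕ∞ :=
  plen A (↥M ⧸ (Submodule.comap (Submodule.subtype M) N))

/-- minimal number of generators of an ideal -/
noncomputable def mu {A : Type*} [CommRing A] (I : Ideal A) : ℕ :=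
  sInf {n | ∃ s : Finset A, s.card = n ∧ Ideal.span (s : Set A) = I}


set_option linter.unusedSectionVars false
set_option linter.unnecessarySimpa false

section basics
variable {A M N : Type*} [CommRing A] [AddCommGroup M] [Module A M] [AddCommGroup N] [Module A N]

lemma plen_eq_iSup : plen A M = ⨆ p : LTSeries (Submodule A M), (p.length : ℕ∞) := by
  rw [plen, Order.krullDim_eq_iSup_length]
  rfl

lemma length_le_plen (p : LTSeries (Submodule A M)) : (p.length : ℕ∞) ≤ plen A M := by
  rw [plen_eq_iSup]; exact le_iSup (fun p : LTSeries (Submodule A M) => (p.length : ℕ∞)) p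

lemma plen_congr (e : M ≃ₗ[A] N) : plen A M = plen A N := by
  unfold plen
  rw [Order.krullDim_eq_of_orderIso (Submodule.orderIsoMapComap e)]

lemma plen_eq_zero [Subsingleton M] : plen A M = 0 := by
  have hs : Subsingleton (Submodule A M) :=
    ⟨fun S T => by ext x; rw [Subsingleton.elim x 0]; simp⟩
  have h1 : Order.krullDim (Submodule A M) ≤ 0 := Order.krullDim_nonpos_of_subsingleton
  have h2 : 0 ≤ Order.krullDim (Submodule A M) := Order.krullDim_nonneg
  rw [plen, le_antisymm h1 h2]
  rfl

lemma one_le_plen [Nontrivial M] : 1 ≤ plen A M := by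
  have hne : (⊥ : Submodule A M) ≠ ⊤ := by
    intro h
    obtain ⟨x, y, hxy⟩ := exists_pair_ne M
    apply hxy
    have hx : x ∈ (⊥ : Submodule A M) := h ▸ Submodule.mem_top
    have hy : y ∈ (⊥ : Submodule A M) := h ▸ Submodule.mem_top
    rw [Submodule.mem_bot] at hx hy
    rw [hx, hy]
  have hlt : (⊥ : Submodule A M) < ⊤ := lt_of_le_of_ne bot_le hne
  let p : LTSeries (Submodule A M) :=
    ⟨1, ![⊥, ⊤], by intro i; fin_cases i; simpa using hlt⟩
  simpa [p] using length_le_plen p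

end basics

section lattice

lemma height_add_one_le {β : Type*} [Preorder β] {x y : β} (h : x < y) :
    Order.height x + 1 ≤ Order.height y := by
  rw [Order.height_eq_iSup_lt_height y]
  exact le_iSup₂ (f := fun z (_ : z < y) => Order.height z + 1) x h

lemma height_le_iSup_length {β : Type*} [Preorder β] (x : β) :
    Order.height x ≤ ⨆ q : LTSeries β, (q.length : ℕ∞) := by
  have : Nonempty β := ⟨x⟩
  have h := Order.height_le_krullDim x
  rwa [Order.krullDim_eq_iSup_length, WithBot.coe_le_coe] at h

variable {α : Type*} [Lattice α] [IsModularLattice α]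

lemma chain_le_height_add (a : α) (p : LTSeries α) :
    (p.length : ℕ∞) ≤ Order.height (⟨p.last ⊓ a, inf_le_right⟩ : {b : α // b ≤ a})
      + Order.height (⟨p.last ⊔ a, le_sup_right⟩ : {b : α // a ≤ b}) := by
  obtain ⟨n, hn⟩ : ∃ n, p.length = n := ⟨_, rfl⟩
  induction n generalizing p with
  | zero => simp [hn]
  | succ n ih =>
    have hne : p.length ≠ 0 := by omega
    have hlt : p.eraseLast.last < p.last := p.eraseLast_last_rel_last hne
    have h1 := ih p.eraseLast (by simp [hn])
    rw [show p.eraseLast.length = n from by simp [hn]] at h1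
    rw [hn]
    set y := p.eraseLast.last with hy
    set z := p.last with hz
    have hinf : y ⊓ a ≤ z ⊓ a := inf_le_inf_right a hlt.le
    have hsup : y ⊔ a ≤ z ⊔ a := sup_le_sup_right hlt.le a
    have key : y ⊓ a < z ⊓ a ∨ y ⊔ a < z ⊔ a := by
      by_contra hc
      push_neg at hc
      have h2 : z ⊓ a ≤ y ⊓ a := by
        rcases hinf.lt_or_eq with h | h
        · exact absurd h hc.1
        · exact h.ge
      have h3 : z ⊔ a ≤ y ⊔ a := by
        rcases hsup.lt_or_eq with h | h
        · exact absurd h hc.2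
        · exact h.ge
      exact hlt.ne (eq_of_le_of_inf_le_of_sup_le hlt.le h2 h3)
    have hmono1 : Order.height (⟨y ⊓ a, inf_le_right⟩ : {b : α // b ≤ a})
        ≤ Order.height (⟨z ⊓ a, inf_le_right⟩ : {b : α // b ≤ a}) :=
      Order.height_mono (by exact hinf)
    have hmono2 : Order.height (⟨y ⊔ a, le_sup_right⟩ : {b : α // a ≤ b})
        ≤ Order.height (⟨z ⊔ a, le_sup_right⟩ : {b : α // a ≤ b}) :=
      Order.height_mono (by exact hsup)
    have hstep : Order.height (⟨y ⊓ a, inf_le_right⟩ : {b : α // b ≤ a})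
        + Order.height (⟨y ⊔ a, le_sup_right⟩ : {b : α // a ≤ b}) + 1
        ≤ Order.height (⟨z ⊓ a, inf_le_right⟩ : {b : α // b ≤ a})
        + Order.height (⟨z ⊔ a, le_sup_right⟩ : {b : α // a ≤ b}) := by
      rcases key with h | h
      · have := height_add_one_le (x := (⟨y ⊓ a, inf_le_right⟩ : {b : α // b ≤ a}))
          (y := (⟨z ⊓ a, inf_le_right⟩ : {b : α // b ≤ a})) (by exact h)
        calc _ = (Order.height (⟨y ⊓ a, inf_le_right⟩ : {b : α // b ≤ a}) + 1)
              + Order.height (⟨y ⊔ a, le_sup_right⟩ : {b : α // a ≤ b}) := by ring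
        _ ≤ _ := add_le_add this hmono2
      · have := height_add_one_le (x := (⟨y ⊔ a, le_sup_right⟩ : {b : α // a ≤ b}))
          (y := (⟨z ⊔ a, le_sup_right⟩ : {b : α // a ≤ b})) (by exact h)
        calc _ = Order.height (⟨y ⊓ a, inf_le_right⟩ : {b : α // b ≤ a})
              + (Order.height (⟨y ⊔ a, le_sup_right⟩ : {b : α // a ≤ b}) + 1) := by ring
        _ ≤ _ := add_le_add hmono1 this
    calc ((n + 1 : ℕ) : ℕ∞) = (n : ℕ∞) + 1 := by push_cast; ring
    _ ≤ Order.height (⟨y ⊓ a, inf_le_right⟩ : {b : α // b ≤ a})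
        + Order.height (⟨y ⊔ a, le_sup_right⟩ : {b : α // a ≤ b}) + 1 := add_le_add_left h1 1
    _ ≤ _ := hstep

lemma dim_le_add (a : α) : (⨆ p : LTSeries α, (p.length : ℕ∞)) ≤
    (⨆ q : LTSeries {b : α // b ≤ a}, (q.length : ℕ∞))
      + ⨆ q : LTSeries {b : α // a ≤ b}, (q.length : ℕ∞) :=
  iSup_le fun p => (chain_le_height_add a p).trans
    (add_le_add (height_le_iSup_length _) (height_le_iSup_length _))

lemma add_le_dim (a : α) :
    (⨆ q : LTSeries {b : α // b ≤ a}, (q.length : ℕ∞))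
      + (⨆ q : LTSeries {b : α // a ≤ b}, (q.length : ℕ∞))
    ≤ ⨆ p : LTSeries α, (p.length : ℕ∞) := by
  have : Nonempty {b : α // b ≤ a} := ⟨⟨a, le_rfl⟩⟩
  have : Nonempty {b : α // a ≤ b} := ⟨⟨a, le_rfl⟩⟩
  refine ENat.iSup_add_iSup_le fun q q' => ?_
  let P : LTSeries α := q.map Subtype.val (fun _ _ h => h)
  let Q : LTSeries α := q'.map Subtype.val (fun _ _ h => h)
  have hPQ : P.last ≤ Q.head := le_trans q.last.2 q'.head.2
  rcases hPQ.lt_or_eq with h | h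
  · let R : LTSeries α := (P.snoc Q.head h).smash Q (by simp)
    have hR : (R.length : ℕ∞) ≤ ⨆ p : LTSeries α, (p.length : ℕ∞) :=
      le_iSup (fun p : LTSeries α => (p.length : ℕ∞)) R
    refine le_trans ?_ hR
    have hlen : R.length = q.length + 1 + q'.length := by
      have hP : P.length = q.length := rfl
      have hQ : Q.length = q'.length := rfl
      simp [R, RelSeries.smash_length, RelSeries.snoc_length, hP, hQ]
    rw [hlen]
    push_cast
    calc (q.length : ℕ∞) + q'.length ≤ (q.length + 1 : ℕ∞) + q'.length := by
          exact add_le_add_left (by simp [le_add_right]) _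
    _ = _ := by ring
  · let R : LTSeries α := P.smash Q h
    have hR : (R.length : ℕ∞) ≤ ⨆ p : LTSeries α, (p.length : ℕ∞) :=
      le_iSup (fun p : LTSeries α => (p.length : ℕ∞)) R
    refine le_trans ?_ hR
    have hlen : R.length = q.length + q'.length := by
      have hP : P.length = q.length := rfl
      have hQ : Q.length = q'.length := rfl
      simp [R, RelSeries.smash_length, hP, hQ]
    rw [hlen]
    push_cast
    exact le_rfl

end lattice

section basics2
variable {A M N : Type*} [CommRing A] [AddCommGroup M] [Module A M] [AddCommGroup N] [Module A N]

lemma iSup_length_eq_of_orderIso {β γ : Type*} [Preorder β] [Preorder γ] (f : β ≃o γ) :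
    (⨆ p : LTSeries β, (p.length : ℕ∞)) = ⨆ p : LTSeries γ, (p.length : ℕ∞) := by
  apply le_antisymm
  · exact iSup_le fun p => le_iSup_of_le (p.map f f.strictMono) le_rfl
  · exact iSup_le fun p => le_iSup_of_le (p.map f.symm f.symm.strictMono) le_rfl

lemma plen_add (N' : Submodule A M) : plen A M = plen A N' + plen A (M ⧸ N') := by
  rw [plen_eq_iSup (M := M), plen_eq_iSup (M := N'), plen_eq_iSup (M := M ⧸ N')]
  rw [iSup_length_eq_of_orderIso (Submodule.MapSubtype.orderIso N'),
    iSup_length_eq_of_orderIso (Submodule.comapMkQRelIso N')]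
  exact le_antisymm (dim_le_add N') (add_le_dim N')

/-- second isomorphism style: `T/(T ⊓ S) ≃ (T + S)/S`, here for the image in `M ⧸ S`. -/
noncomputable def subQuotEquiv (S T : Submodule A M) :
    (↥T ⧸ Submodule.comap T.subtype S) ≃ₗ[A] ↥(Submodule.map S.mkQ T) := by
  let f : ↥T →ₗ[A] M ⧸ S := S.mkQ ∘ₗ T.subtype
  have hker : LinearMap.ker f = Submodule.comap T.subtype S := by
    rw [LinearMap.ker_comp, Submodule.ker_mkQ]
  have hrange : LinearMap.range f = Submodule.map S.mkQ T := by
    rw [LinearMap.range_comp, Submodule.range_subtype]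
  exact (Submodule.quotEquivOfEq _ _ hker.symm).trans
    ((LinearMap.quotKerEquivRange f).trans (LinearEquiv.ofEq _ _ hrange))

lemma plen_three (S T : Submodule A M) (h : S ≤ T) :
    plen A (M ⧸ S) = plen A (↥T ⧸ Submodule.comap T.subtype S) + plen A (M ⧸ T) := by
  rw [plen_add (Submodule.map S.mkQ T)]
  rw [plen_congr (subQuotEquiv S T)]
  rw [plen_congr (Submodule.quotientQuotientEquivQuotient S T h)]

end basics2

section vs
variable {A k V : Type*} [CommRing A] [Field k] [Algebra A k]
  [AddCommGroup V] [Module A V] [Module k V] [IsScalarTower A k V]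

/-- If the algebra map is surjective, `A`-submodules and `k`-submodules of `V` coincide. -/
def submoduleOrderIso (hsur : Surjective (algebraMap A k)) :
    Submodule A V ≃o Submodule k V where
  toFun S :=
    { carrier := S
      add_mem' := fun h1 h2 => S.add_mem h1 h2
      zero_mem' := S.zero_mem
      smul_mem' := by
        intro c v hv
        obtain ⟨a, rfl⟩ := hsur c
        rw [algebraMap_smul]
        exact S.smul_mem a hv }
  invFun S := S.restrictScalars A
  left_inv S := by ext x; rfl
  right_inv S := by ext x; rfl
  map_rel_iff' := Iff.rfl

lemma plen_eq_plen_field (hsur : Surjective (algebraMap A k)) :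
    plen A V = plen k V := by
  unfold plen
  rw [Order.krullDim_eq_of_orderIso (submoduleOrderIso (A := A) (k := k) (V := V) hsur)]

lemma nat_chain_le (p : LTSeries ℕ) : p.head + p.length ≤ p.last :=
  LTSeries.head_add_length_le_nat p

lemma plen_eq_finrank [FiniteDimensional k V] :
    plen k V = (Module.finrank k V : ℕ∞) := by
  rw [plen_eq_iSup]
  apply le_antisymm
  · refine iSup_le fun p => ?_
    have hmono : StrictMono (fun W : Submodule k V => Module.finrank k W) := fun W1 W2 h =>
      Submodule.finrank_lt_finrank_of_lt h
    have h1 := nat_chain_le (p.map _ hmono)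
    have h2 : (p.map _ hmono).length = p.length := rfl
    have h3 : (p.map _ hmono).last = Module.finrank k p.last := by
      rw [LTSeries.last_map]
    have hlast : Module.finrank k (p.last : Submodule k V) ≤ Module.finrank k V :=
      Submodule.finrank_le _
    have : p.length ≤ Module.finrank k V := by omega
    exact_mod_cast this
  · classical
    set d := Module.finrank k V with hd
    let b := Module.finBasis k V
    let W : Fin (d+1) → Submodule k V := fun i =>
      Submodule.span k (b '' {j : Fin d | (j : ℕ) < (i : ℕ)})
    have hstep : ∀ i : Fin d, W i.castSucc < W i.succ := by
      intro i
      have hle : W i.castSucc ≤ W i.succ := Submodule.span_mono (Set.image_mono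
        (fun j hj => by
          simp only [Set.mem_setOf_eq, Fin.coe_castSucc] at hj ⊢
          simp only [Fin.val_succ]
          change (j:ℕ) < (i:ℕ) at hj
          change (j:ℕ) < (i:ℕ) + 1
          omega))
      have hmem : b i ∈ W i.succ := Submodule.subset_span ⟨i, by simp; exact le_refl i, rfl⟩
      have hnot : b i ∉ W i.castSucc :=
        b.linearIndependent.notMem_span_image (by simp; exact fun h => lt_irrefl i h)
      exact lt_of_le_of_ne hle (fun h => hnot (h ▸ hmem))
    let p : LTSeries (Submodule k V) := ⟨d, fun i => W i, hstep⟩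
    exact le_iSup_of_le p le_rfl
end vs

section wrappers
variable {A M : Type*} [CommRing A] [AddCommGroup M] [Module A M]
lemma plen_eq_zero' (h : Subsingleton M) : plen A M = 0 := by
  haveI := h; exact plen_eq_zero
lemma one_le_plen' (h : Nontrivial M) : 1 ≤ plen A M := by
  haveI := h; exact one_le_plen
end wrappers

section nakayama

variable {A : Type*} [CommRing A] [IsLocalRing A] [IsNoetherianRing A]

/-- the module `I / m I` -/
local notation "m" => maximalIdeal A

lemma mu_plen (I : Ideal A) :
    (mu I : ℕ∞) = plen A (↥I ⧸ Submodule.comap I.subtype (maximalIdeal A * I)) ∧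
      plen A (↥I ⧸ Submodule.comap I.subtype (maximalIdeal A * I)) ≠ ⊤ := by
  classical
  set N : Submodule A ↥I := Submodule.comap I.subtype (maximalIdeal A * I) with hN
  set V := (↥I ⧸ N) with hV
  -- torsion structure
  have hT : Module.IsTorsionBySet A V (m : Set A) := by
    intro v a
    obtain ⟨y, rfl⟩ := Submodule.mkQ_surjective N v
    rw [← map_smul, Submodule.mkQ_apply, Submodule.Quotient.mk_eq_zero]
    exact Submodule.mem_comap.mpr (Ideal.mul_mem_mul a.2 y.2)
  letI k := A ⧸ m
  letI : Field k := Ideal.Quotient.field m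
  letI : Module k V := hT.module
  haveI : IsScalarTower A k V := hT.isScalarTower
  have hsur : Surjective (algebraMap A k) := Ideal.Quotient.mk_surjective
  -- finiteness
  haveI : Module.Finite A ↥I := Module.Finite.iff_fg.mpr (IsNoetherian.noetherian I)
  haveI : Module.Finite A V := Module.Finite.of_surjective N.mkQ (Submodule.mkQ_surjective N)
  haveI : Module.Finite k V := Module.Finite.of_restrictScalars_finite A k V
  have hplen : plen A V = (Module.finrank k V : ℕ∞) := by
    rw [plen_eq_plen_field hsur, plen_eq_finrank]
  set d := Module.finrank k V with hd
  -- Nakayama: N = m • ⊤ inside ↥I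
  have hNsmul : N = (m : Ideal A) • (⊤ : Submodule A ↥I) := by
    have h1 : Submodule.map I.subtype ((m : Ideal A) • (⊤ : Submodule A ↥I)) = m * I := by
      rw [Submodule.map_smul'', Submodule.map_top, Submodule.range_subtype, Ideal.smul_eq_mul]
    rw [hN, ← h1, Submodule.comap_map_eq, Submodule.ker_subtype, sup_bot_eq]
  -- direction 1: every generating finset has card ≥ d
  have dir1 : ∀ n ∈ {n | ∃ s : Finset A, s.card = n ∧ Ideal.span (s : Set A) = I}, d ≤ n := by
    rintro n ⟨s, hcard, hspan⟩
    have hsub : ∀ a ∈ s, a ∈ I := fun a ha => hspan ▸ Submodule.subset_span ha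
    let t : Finset ↥I := s.attach.image (fun a => (⟨a.1, hsub a.1 a.2⟩ : ↥I))
    have himg : I.subtype '' (t : Set ↥I) = (s : Set A) := by
      ext a
      constructor
      · rintro ⟨y, hy, rfl⟩
        rw [Finset.mem_coe, Finset.mem_image] at hy
        obtain ⟨b, -, rfl⟩ := hy
        exact b.2
      · intro ha
        rw [Finset.mem_coe] at ha
        refine ⟨⟨a, hsub a ha⟩, ?_, rfl⟩
        rw [Finset.mem_coe, Finset.mem_image]
        exact ⟨⟨a, ha⟩, Finset.mem_attach _ _, rfl⟩
    have hspan' : Submodule.span A (t : Set ↥I) = ⊤ := by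
      apply Submodule.map_injective_of_injective (Submodule.injective_subtype I)
      rw [Submodule.map_span, himg, Submodule.map_top, Submodule.range_subtype]
      exact hspan
    -- push to V
    have hspanV : Submodule.span k (N.mkQ '' (t : Set ↥I)) = ⊤ := by
      apply Submodule.restrictScalars_injective A
      rw [Submodule.restrictScalars_span A k hsur, ← Submodule.map_span,
        hspan', Submodule.map_top, Submodule.range_mkQ]
      rfl
    have hfin : d ≤ (t.image N.mkQ).card := by
      have : Submodule.span k ((t.image N.mkQ : Finset V) : Set V) = ⊤ := by
        rwa [Finset.coe_image]
      have hle := finrank_span_finset_le_card (R := k) (t.image N.mkQ)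
      rw [Set.finrank, this, finrank_top] at hle
      exact hle
    calc d ≤ (t.image N.mkQ).card := hfin
    _ ≤ t.card := Finset.card_image_le
    _ ≤ s.attach.card := Finset.card_image_le
    _ = n := by rw [Finset.card_attach, hcard]
  -- direction 2: there is a generating set of card ≤ d
  have dir2 : ∃ n ∈ {n | ∃ s : Finset A, s.card = n ∧ Ideal.span (s : Set A) = I}, n ≤ d := by
    let b := Module.finBasis k V
    choose y hy using fun i : Fin d => Submodule.mkQ_surjective N (b i)
    let S : Submodule A ↥I := Submodule.span A (Set.range y)
    have hmapS : Submodule.map N.mkQ S = ⊤ := by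
      apply Submodule.restrictScalars_injective A
      have h1 : N.mkQ '' (Set.range y) = Set.range (b : Fin d → V) := by
        ext v
        simp only [Set.mem_image, Set.mem_range]
        constructor
        · rintro ⟨_, ⟨i, rfl⟩, rfl⟩; exact ⟨i, (hy i).symm⟩
        · rintro ⟨i, rfl⟩; exact ⟨y i, ⟨i, rfl⟩, hy i⟩

      rw [Submodule.map_span, h1, ← Submodule.restrictScalars_span A k hsur, b.span_eq]
      rfl
    have hS : S = ⊤ := by
      have htop : (⊤ : Submodule A ↥I) ≤ S ⊔ (m : Ideal A) • (⊤ : Submodule A ↥I) := by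
        rw [← hNsmul]
        intro z _
        have : N.mkQ z ∈ Submodule.map N.mkQ S := hmapS ▸ Submodule.mem_top
        obtain ⟨w, hw, hwz⟩ := this
        have : z - w ∈ N := by
          rw [← Submodule.Quotient.mk_eq_zero]
          change N.mkQ (z - w) = 0
          rw [map_sub, hwz, sub_self]
        have hz : z = w + (z - w) := by abel
        rw [hz]
        exact Submodule.add_mem_sup hw this
      have := Submodule.le_of_le_smul_of_le_jacobson_bot (IsNoetherian.noetherian ⊤)
        (le_of_eq (IsLocalRing.jacobson_eq_maximalIdeal ⊥ bot_ne_top).symm) htop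
      exact le_antisymm le_top this
    refine ⟨(Finset.univ.image (fun i => (y i : A))).card,
      ⟨Finset.univ.image (fun i => (y i : A)), rfl, ?_⟩, ?_⟩
    · have : ((Finset.univ.image (fun i => (y i : A)) : Finset A) : Set A)
          = I.subtype '' (Set.range y) := by
        ext a; simp [Set.mem_image]
      rw [this, show Ideal.span (⇑(Submodule.subtype I) '' Set.range y)
          = Submodule.map I.subtype S from (Submodule.map_span _ _).symm,
        hS, Submodule.map_top, Submodule.range_subtype]
    · calc (Finset.univ.image (fun i => (y i : A))).card ≤ Finset.univ.card :=
          Finset.card_image_le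
      _ = d := by simp
  -- combine
  obtain ⟨n0, hn0, hn0d⟩ := dir2
  have hmu : mu I = d := by
    apply le_antisymm
    · exact le_trans (Nat.sInf_le hn0) hn0d
    · exact le_csInf ⟨n0, hn0⟩ dir1
  constructor
  · rw [hmu, hplen]
  · rw [hplen]; exact (by simp : ((d : ℕ∞)) ≠ ⊤)

end nakayama

section main
variable {A : Type*} [CommRing A] [IsLocalRing A] [IsNoetherianRing A]

/-- `xA / xI ≅ A / I` for a regular element `x`. -/
lemma plen_xA_xI (x : A) (hreg : x ∈ nonZeroDivisors A) (I : Ideal A) :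
    plen A (↥(Ideal.span {x}) ⧸
        Submodule.comap (Ideal.span {x}).subtype (Ideal.span {x} * I))
      = plen A (A ⧸ I) := by
  set N : Submodule A ↥(Ideal.span {x}) :=
    Submodule.comap (Ideal.span {x}).subtype (Ideal.span {x} * I) with hN
  let f : A →ₗ[A] ↥(Ideal.span {x}) :=
    LinearMap.codRestrict (Ideal.span {x} : Ideal A)
      (LinearMap.toSpanSingleton A A x)
      (fun a => Ideal.mem_span_singleton'.mpr
        ⟨a, by rw [LinearMap.toSpanSingleton_apply, smul_eq_mul]⟩)
  let g : A →ₗ[A] (↥(Ideal.span {x}) ⧸ N) := N.mkQ ∘ₗ f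
  have hgsur : Surjective g := by
    intro v
    obtain ⟨z, rfl⟩ := Submodule.mkQ_surjective N v
    obtain ⟨a, ha⟩ := Ideal.mem_span_singleton'.mp z.2
    refine ⟨a, ?_⟩
    show N.mkQ (f a) = N.mkQ z
    congr 1
    ext
    simpa [f, LinearMap.toSpanSingleton_apply, smul_eq_mul] using ha
  have hker : LinearMap.ker g = I := by
    ext a
    simp only [LinearMap.mem_ker, g, LinearMap.comp_apply]
    rw [show N.mkQ (f a) = Submodule.Quotient.mk (f a) from rfl, Submodule.Quotient.mk_eq_zero]
    constructor
    · intro h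
      have h2 : a * x ∈ Ideal.span {x} * I := by
        simpa [f, N, LinearMap.toSpanSingleton_apply, smul_eq_mul] using h
      obtain ⟨z, hz, hzx⟩ := Ideal.mem_span_singleton_mul.mp h2
      have : x * z = x * a := by rw [hzx]; ring
      have := mul_cancel_left_mem_nonZeroDivisors hreg |>.mp this
      rwa [← this]
    · intro ha
      show f a ∈ N
      have : a * x ∈ Ideal.span {x} * I := by
        rw [mul_comm a x]
        exact Ideal.mul_mem_mul (Ideal.mem_span_singleton_self x) ha
      simpa [f, N, LinearMap.toSpanSingleton_apply, smul_eq_mul] using this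
  have e1 : (A ⧸ I) ≃ₗ[A] (↥(Ideal.span {x}) ⧸ N) :=
    (Submodule.quotEquivOfEq _ _ hker.symm).trans (g.quotKerEquivOfSurjective hgsur)
  exact (plen_congr e1).symm

end main

noncomputable def Fl {A : Type*} [CommRing A] (S T : Ideal A) : ℕ∞ :=
  plen A (↥T ⧸ Submodule.comap T.subtype S)

section assembly
variable {A : Type*} [CommRing A] [IsLocalRing A] [IsNoetherianRing A]

lemma lenQ_eq_Fl (I J : Ideal A) : lenQ I J = Fl J I := rfl

lemma plen_three' (S T : Ideal A) (h : S ≤ T) :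
    plen A (A ⧸ S) = Fl S T + plen A (A ⧸ T) := plen_three S T h

theorem stmt0' (hdim : ringKrullDim A = 1)
    (x : A) (hx : x ∈ maximalIdeal A) (hreg : x ∈ nonZeroDivisors A)
    (r : ℕ)
    (hred : maximalIdeal A ^ (r + 1) = Ideal.span {x} * maximalIdeal A ^ r)
    (hrmin : ∀ s < r, maximalIdeal A ^ (s + 1) ≠ Ideal.span {x} * maximalIdeal A ^ s)
    (e : ℕ) (he : plen A (A ⧸ Ideal.span {x}) = (e : ℕ∞)) :
    (∀ n, r ≤ n → (mu (maximalIdeal A ^ n) : ℕ∞) = (e : ℕ∞)) ∧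
    (∀ n < r, (mu (maximalIdeal A ^ n) : ℕ∞)
        = (e : ℕ∞) - lenQ (maximalIdeal A ^ (n + 1)) (Ideal.span {x} * maximalIdeal A ^ n) ∧
      (mu (maximalIdeal A ^ n) : ℕ∞) < (e : ℕ∞)) := by
  set m : Ideal A := maximalIdeal A with hm
  have hxm : Ideal.span {x} ≤ m := Ideal.span_le.mpr (Set.singleton_subset_iff.mpr hx)
  have hmu : ∀ n : ℕ, (mu (m ^ n) : ℕ∞) = Fl (m ^ (n+1)) (m ^ n)
      ∧ Fl (m ^ (n+1)) (m ^ n) ≠ ⊤ := by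
    intro n
    have h := mu_plen (m ^ n)
    rw [show maximalIdeal A * m ^ n = m ^ (n+1) from (pow_succ' m n).symm] at h
    exact h
  have hL : ∀ n : ℕ, plen A (A ⧸ (m ^ n : Ideal A)) ≠ ⊤ := by
    intro n
    induction n with
    | zero =>
      rw [pow_zero, Ideal.one_eq_top]
      have hsub : Subsingleton (A ⧸ (⊤ : Ideal A)) :=
        Submodule.Quotient.subsingleton_iff.mpr rfl
      rw [plen_eq_zero' hsub]
      simp
    | succ n ih =>
      rw [plen_three' (m ^ (n+1)) (m ^ n) (Ideal.pow_le_pow_right (by omega))]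
      exact WithTop.add_ne_top.mpr ⟨(hmu n).2, ih⟩
  have key1 : ∀ n : ℕ, Fl (Ideal.span {x} * m ^ n) (m ^ n) = (e : ℕ∞) := by
    intro n
    have h1 := plen_three' (Ideal.span {x} * m ^ n) (m ^ n) Ideal.mul_le_right
    have h2 := plen_three' (Ideal.span {x} * m ^ n) (Ideal.span {x}) Ideal.mul_le_left
    have h2' : Fl (Ideal.span {x} * m ^ n) (Ideal.span {x}) = plen A (A ⧸ (m ^ n : Ideal A)) :=
      plen_xA_xI x hreg (m ^ n)
    rw [h2', he] at h2
    rw [h2] at h1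
    -- h1 : plen (A ⧸ m^n) + e = Fl S m^n + plen (A ⧸ m^n)
    rw [add_comm] at h1
    exact (WithTop.add_right_cancel (hL n) h1).symm
  have hred' : ∀ n, r ≤ n → m ^ (n + 1) = Ideal.span {x} * m ^ n := by
    intro n hn
    induction n with
    | zero =>
      obtain rfl : r = 0 := Nat.le_zero.mp hn
      exact hred
    | succ n ih =>
      rcases Nat.lt_or_ge r (n+1) with h | h
      · have hnr : r ≤ n := by omega
        have hstep := ih hnr
        calc m ^ (n+2) = m * m ^ (n+1) := pow_succ' m (n+1)
        _ = m * (Ideal.span {x} * m ^ n) := by rw [hstep]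
        _ = Ideal.span {x} * (m * m ^ n) := by ring
        _ = Ideal.span {x} * m ^ (n+1) := by rw [← pow_succ']
      · have hrn : r = n + 1 := by omega
        rw [← hrn]
        exact hred
  constructor
  · intro n hn
    rw [(hmu n).1, hred' n hn, key1 n]
  · intro n hn
    have hS1 : Ideal.span {x} * m ^ n ≤ m ^ (n+1) := by
      rw [pow_succ']
      exact Ideal.mul_mono hxm le_rfl
    have hS2 : (m : Ideal A) ^ (n+1) ≤ m ^ n := Ideal.pow_le_pow_right (by omega)
    have h1 := plen_three' (Ideal.span {x} * m ^ n) (m ^ n) Ideal.mul_le_right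
    have h3 := plen_three' (Ideal.span {x} * m ^ n) (m ^ (n+1)) hS1
    have h4 := plen_three' (m ^ (n+1) : Ideal A) (m ^ n) hS2
    rw [key1 n] at h1
    rw [h4, h1, ← add_assoc] at h3
    have hsum : (e : ℕ∞) = Fl (Ideal.span {x} * m ^ n) (m ^ (n+1)) + Fl (m ^ (n+1)) (m ^ n) :=
      WithTop.add_right_cancel (hL n) h3
    have hlt : Ideal.span {x} * m ^ n < m ^ (n+1) :=
      lt_of_le_of_ne hS1 (fun hcontra => hrmin n hn hcontra.symm)
    have hnontriv : Nontrivial (↥(m ^ (n+1) : Ideal A) ⧸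
        Submodule.comap (m ^ (n+1) : Ideal A).subtype (Ideal.span {x} * m ^ n)) := by
      apply Submodule.Quotient.nontrivial_iff.mpr
      intro hcontra
      rw [Submodule.comap_subtype_eq_top] at hcontra
      exact hlt.ne (le_antisymm hS1 hcontra)
    have hpos : 1 ≤ Fl (Ideal.span {x} * m ^ n) (m ^ (n+1)) := one_le_plen' hnontriv
    have hFne : Fl (Ideal.span {x} * m ^ n) (m ^ (n+1)) ≠ ⊤ := by
      intro h
      rw [h] at hsum
      simp at hsum
    obtain ⟨c, hc⟩ : ∃ c : ℕ, (c : ℕ∞) = Fl (Ideal.span {x} * m ^ n) (m ^ (n+1)) := by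
      lift Fl (Ideal.span {x} * m ^ n) (m ^ (n+1)) to ℕ using hFne with c hc
      exact ⟨c, rfl⟩
    have hce : c + mu (m ^ n) = e := by
      have h5 := hsum
      rw [← hc, ← (hmu n).1] at h5
      exact_mod_cast h5.symm
    have hc1 : 1 ≤ c := by
      have h6 := hpos
      rw [← hc] at h6
      exact_mod_cast h6
    constructor
    · rw [lenQ_eq_Fl, ← hc, (hmu n).1, ← ENat.coe_sub, ← (hmu n).1]
      have : mu (m ^ n) = e - c := by omega
      exact_mod_cast this
    · have : mu (m ^ n) < e := by omega
      exact_mod_cast this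

end assembly

theorem stmt0 {A : Type*} [CommRing A] [IsLocalRing A] [IsNoetherianRing A]
    [Infinite (IsLocalRing.ResidueField A)]
    (hdim : ringKrullDim A = 1)
    (x : A) (hx : x ∈ maximalIdeal A) (hreg : x ∈ nonZeroDivisors A)
    (r : ℕ)
    (hred : maximalIdeal A ^ (r + 1) = Ideal.span {x} * maximalIdeal A ^ r)
    (hrmin : ∀ s < r, maximalIdeal A ^ (s + 1) ≠ Ideal.span {x} * maximalIdeal A ^ s)
    (e : ℕ) (he : plen A (A ⧸ Ideal.span {x}) = (e : ℕ∞)) :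
    (∀ n, r ≤ n → (mu (maximalIdeal A ^ n) : ℕ∞) = (e : ℕ∞)) ∧
    (∀ n < r, (mu (maximalIdeal A ^ n) : ℕ∞)
        = (e : ℕ∞) - lenQ (maximalIdeal A ^ (n + 1)) (Ideal.span {x} * maximalIdeal A ^ n) ∧
      (mu (maximalIdeal A ^ n) : ℕ∞) < (e : ℕ∞)) :=
  stmt0' hdim x hx hreg r hred hrmin e he
end

section
/- Let (A, m) be a one-dimensional Cohen-Macaulay local ring with infinite residue field, multiplicity e, reduction number r, minimal reduction xA of m, and first neighborhood ring A'. Then λ(A'/m^n A') = n·e for all n ≥ 1 and λ(A'/A) = ρ, where ρ is the constant term defect of the Hilbert-Samuel function (H^1(n) = e(n+1) − ρ for n ≫ 0). -/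
open IsLocalRing Ideal Submodule

/-- The first neighborhood ring `A' = A[m/x]`, as a subalgebra of the total
ring of fractions of `A`. -/
noncomputable def firstNbhd (A : Type*) [CommRing A] [IsLocalRing A] (x : A) :
    Subalgebra A (FractionRing A) :=
  Algebra.adjoin A {q : FractionRing A | ∃ a ∈ maximalIdeal A,
    q * algebraMap A (FractionRing A) x = algebraMap A (FractionRing A) a}

/-- The image of `m^n` in the total ring of fractions, as an `A`-submodule. -/
noncomputable def mImg (A : Type*) [CommRing A] [IsLocalRing A] (n : ℕ) :
    Submodule A (FractionRing A) :=
  Submodule.span A (algebraMap A (FractionRing A) ''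
    ((maximalIdeal A ^ n : Ideal A) : Set A))


section AuxOrder
open Order


variable {α β γ : Type*}

noncomputable def kd (α : Type*) [Preorder α] : ℕ∞ := WithBot.unbotD 0 (Order.krullDim α)

lemma kd_eq [Preorder α] [Nonempty α] : (kd α : WithBot ℕ∞) = Order.krullDim α := by
  have h := krullDim_nonneg (α := α)
  cases k : Order.krullDim α with
  | bot => rw [k] at h; exact absurd h (by simp)
  | coe a => rw [kd, k, WithBot.unbotD_coe]

lemma length_le_kd [Preorder α] (p : LTSeries α) : (p.length : ℕ∞) ≤ kd α := by
  have : Nonempty α := ⟨p.head⟩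
  have h := Order.LTSeries.length_le_krullDim p
  rw [← kd_eq] at h
  exact_mod_cast h

lemma kd_le [Preorder α] [Nonempty α] {n : ℕ∞} (h : ∀ p : LTSeries α, (p.length : ℕ∞) ≤ n) :
    kd α ≤ n := by
  have : Order.krullDim α ≤ (n : WithBot ℕ∞) := by
    rw [Order.krullDim]
    exact iSup_le fun p => by exact_mod_cast h p
  rw [← kd_eq] at this
  exact_mod_cast this

lemma height_add_one_le_s5 [Preorder α] {a b : α} (h : a < b) :
    Order.height a + 1 ≤ Order.height b := by
  rw [Order.height_eq_iSup_lt_height b]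
  exact le_iSup₂_of_le a h le_rfl

lemma height_le_kd [Preorder α] (a : α) : Order.height a ≤ kd α := by
  rw [Order.height]
  exact iSup₂_le fun p _ => length_le_kd p

lemma LTSeries.length_le_height_add_height [PartialOrder β] [PartialOrder γ]
    (p : LTSeries (β × γ)) (i : Fin (p.length + 1)) :
    (i : ℕ∞) ≤ Order.height (p i).1 + Order.height (p i).2 := by
  induction i using Fin.induction with
  | zero => simp
  | succ i ih =>
    have hlt : p i.castSucc < p i.succ := p.strictMono Fin.castSucc_lt_succ
    rw [Prod.lt_iff] at hlt
    have : ((i : ℕ) + 1 : ℕ∞) ≤ height (p i.succ).1 + height (p i.succ).2 := by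
      rcases hlt with ⟨h1, h2⟩ | ⟨h1, h2⟩
      · calc ((i : ℕ) + 1 : ℕ∞) ≤ (height (p i.castSucc).1 + height (p i.castSucc).2) + 1 :=
              add_le_add ih le_rfl
          _ = (height (p i.castSucc).1 + 1) + height (p i.castSucc).2 := by ring
          _ ≤ height (p i.succ).1 + height (p i.succ).2 :=
              add_le_add (_root_.height_add_one_le_s5 h1) (height_mono h2)
      · calc ((i : ℕ) + 1 : ℕ∞) ≤ (height (p i.castSucc).1 + height (p i.castSucc).2) + 1 :=
              add_le_add ih le_rfl
          _ = height (p i.castSucc).1 + (height (p i.castSucc).2 + 1) := by ring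
          _ ≤ height (p i.succ).1 + height (p i.succ).2 :=
              add_le_add (height_mono h1) (_root_.height_add_one_le_s5 h2)
    simpa using this

lemma kd_prod_le [PartialOrder β] [PartialOrder γ] [Nonempty β] [Nonempty γ] :
    kd (β × γ) ≤ kd β + kd γ := by
  apply kd_le
  intro p
  calc (p.length : ℕ∞) ≤ height p.last.1 + height p.last.2 := by
        have h := p.length_le_height_add_height (Fin.last _); simp only [Fin.val_last] at h; exact h
    _ ≤ kd β + kd γ := add_le_add (height_le_kd _) (height_le_kd _)





lemma kd_eq_iSup [Preorder α] [Nonempty α] : kd α = ⨆ p : LTSeries α, (p.length : ℕ∞) :=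
  le_antisymm (kd_le fun p => le_iSup (fun p : LTSeries α => (p.length : ℕ∞)) p)
    (iSup_le fun p => length_le_kd p)

lemma chain_through [Lattice α] (a : α) (p : LTSeries (Set.Iic a)) (q : LTSeries (Set.Ici a)) :
    (p.length : ℕ∞) + (q.length : ℕ∞) ≤ kd α := by
  classical
  let p' : LTSeries α := p.map _ (Subtype.strictMono_coe _)
  let q' : LTSeries α := q.map _ (Subtype.strictMono_coe _)
  have hp'last : p'.last ≤ a := (p.last).2
  have hq'head : a ≤ q'.head := (q.head).2
  have hp'len : p'.length = p.length := rfl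
  have hq'len : q'.length = q.length := rfl
  by_cases hp : p'.last = a <;> by_cases hq : q'.head = a
  · have h1 := length_le_kd (p'.smash q' (by rw [hp, hq]))
    have hl : (p'.smash q' (by rw [hp, hq])).length = p.length + q.length := rfl
    rw [hl] at h1; exact_mod_cast h1
  · have hc : p'.last = (q'.cons a (lt_of_le_of_ne hq'head (Ne.symm hq))).head := by simp [hp]
    have h1 := length_le_kd (p'.smash _ hc)
    have hl : (p'.smash _ hc).length = p.length + (0 + q.length + 1) := rfl
    rw [hl] at h1
    refine le_trans ?_ h1
    rw [← Nat.cast_add]; exact Nat.cast_le.2 (by omega)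
  · have hc : (p'.snoc a (lt_of_le_of_ne hp'last hp)).last = q'.head := by simp [hq]
    have h1 := length_le_kd (RelSeries.smash _ q' hc)
    have hl : (RelSeries.smash _ q' hc).length = (p.length + 0 + 1) + q.length := rfl
    rw [hl] at h1
    refine le_trans ?_ h1
    rw [← Nat.cast_add]; exact Nat.cast_le.2 (by omega)
  · have hc : (p'.snoc a (lt_of_le_of_ne hp'last hp)).last
        = (q'.cons a (lt_of_le_of_ne hq'head (Ne.symm hq))).head := by simp
    have h1 := length_le_kd (RelSeries.smash _ _ hc)
    have hl : (RelSeries.smash _ _ hc).length = (p.length + 0 + 1) + (0 + q.length + 1) := rfl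
    rw [hl] at h1
    refine le_trans ?_ h1
    rw [← Nat.cast_add]; exact Nat.cast_le.2 (by omega)

lemma kd_Iic_add_kd_Ici_le [Lattice α] (a : α) :
    kd (Set.Iic a) + kd (Set.Ici a) ≤ kd α := by
  have h1 : Nonempty (Set.Iic a) := ⟨⟨a, le_rfl⟩⟩
  have h2 : Nonempty (Set.Ici a) := ⟨⟨a, le_rfl⟩⟩
  rw [kd_eq_iSup (α := Set.Iic a), kd_eq_iSup (α := Set.Ici a), ENat.iSup_add]
  apply iSup_le; intro p
  rw [ENat.add_iSup]
  exact iSup_le fun q => chain_through a p q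

lemma le_kd_pair [Lattice α] [IsModularLattice α] (a : α) :
    kd α ≤ kd (Set.Iic a) + kd (Set.Ici a) := by
  have h1 : Nonempty (Set.Iic a) := ⟨⟨a, le_rfl⟩⟩
  have h2 : Nonempty (Set.Ici a) := ⟨⟨a, le_rfl⟩⟩
  have : Nonempty α := ⟨a⟩
  apply kd_le
  intro p
  let q : LTSeries (Set.Iic a × Set.Ici a) := p.map
    (fun x => (⟨x ⊓ a, inf_le_right⟩, ⟨x ⊔ a, le_sup_right⟩))
    (by
      intro x y hxy
      refine lt_of_le_of_ne
        ⟨Subtype.mk_le_mk.2 (inf_le_inf_right a hxy.le),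
         Subtype.mk_le_mk.2 (sup_le_sup_right hxy.le a)⟩ ?_
      intro heq
      have h1' : x ⊓ a = y ⊓ a := congrArg (fun z => (z.1 : α)) heq
      have h2' : x ⊔ a = y ⊔ a := congrArg (fun z => (z.2 : α)) heq
      exact (sup_lt_sup_of_lt_of_inf_le_inf hxy h1'.ge).ne h2')
  calc (p.length : ℕ∞) = q.length := rfl
    _ ≤ kd _ := length_le_kd q
    _ ≤ _ := kd_prod_le

lemma kd_modular [Lattice α] [IsModularLattice α] (a : α) :
    kd α = kd (Set.Iic a) + kd (Set.Ici a) :=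
  le_antisymm (le_kd_pair a) (kd_Iic_add_kd_Ici_le a)

end AuxOrder

section AuxModule
open Order Submodule







lemma kd_orderIso {α β : Type*} [Preorder α] [Preorder β] (e : α ≃o β) : kd α = kd β := by
  rw [kd, kd, Order.krullDim_eq_of_orderIso e]

variable {A : Type*} [CommRing A]

lemma plen_congr_s5 {X Y : Type*} [AddCommGroup X] [Module A X] [AddCommGroup Y] [Module A Y]
    (e : X ≃ₗ[A] Y) : plen A X = plen A Y :=
  kd_orderIso (Submodule.orderIsoMapComap e)

lemma plen_additive {X : Type*} [AddCommGroup X] [Module A X] (U : Submodule A X) :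
    plen A X = plen A ↥U + plen A (X ⧸ U) := by
  have h1 : plen A ↥U = kd (Set.Iic U) := kd_orderIso
    ((Submodule.MapSubtype.orderIso U).trans (OrderIso.setCongr _ _ (by ext; exact Iff.rfl)))
  have h2 : plen A (X ⧸ U) = kd (Set.Ici U) := kd_orderIso
    ((Submodule.comapMkQRelIso U).trans (OrderIso.setCongr _ _ (by ext; exact Iff.rfl)))
  rw [plen, ← kd, kd_modular U, h1, h2]






variable {A V W : Type*} [CommRing A] [AddCommGroup V] [Module A V] [AddCommGroup W] [Module A W]

noncomputable def qlen (M N : Submodule A V) : ℕ∞ :=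
  plen A (↥M ⧸ (Submodule.comap (Submodule.subtype M) N))

lemma qlen_inf (M N : Submodule A V) : qlen M N = qlen M (N ⊓ M) := by
  have h : comap (Submodule.subtype M) N = comap (Submodule.subtype M) (N ⊓ M) := by
    ext ⟨x, hx⟩; simp [hx]
  rw [qlen, qlen, h]

lemma qlen_eq_zero (M N : Submodule A V) (h : M ≤ N) : qlen M N = 0 := by
  have : comap (Submodule.subtype M) N = ⊤ := by
    ext ⟨x, hx⟩; simpa using h hx
  rw [qlen, this]
  have : Subsingleton (↥M ⧸ (⊤ : Submodule A ↥M)) :=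
    Submodule.Quotient.subsingleton_iff.2 rfl
  have : Unique (Submodule A (↥M ⧸ (⊤ : Submodule A ↥M))) := inferInstance
  rw [plen, Order.krullDim_eq_zero_of_unique]
  rfl

lemma plen_pos {X : Type*} [AddCommGroup X] [Module A X] [Nontrivial X] :
    1 ≤ plen A X := by
  have hbt : (⊥ : Submodule A X) < ⊤ := bot_lt_top
  let p : LTSeries (Submodule A X) := (RelSeries.singleton _ (⊤ : Submodule A X)).cons ⊥ hbt
  have := Order.LTSeries.length_le_krullDim p
  have hp : p.length = 1 := rfl
  rw [hp] at this
  rw [plen]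
  cases k : Order.krullDim (Submodule A X) with
  | bot => rw [k] at this; exact absurd this (by simp)
  | coe a => rw [k] at this; rw [WithBot.unbotD_coe]; exact_mod_cast this

lemma qlen_top (J : Submodule A V) : qlen ⊤ J = plen A (V ⧸ J) := by
  refine plen_congr_s5 (Submodule.Quotient.equiv _ _ (Submodule.topEquiv) ?_)
  ext x
  simp only [Submodule.mem_map]
  constructor
  · rintro ⟨y, hy, h⟩
    have hyx : (y : V) = x := by simpa using h
    exact hyx ▸ hy
  · intro hx; exact ⟨⟨x, trivial⟩, hx, rfl⟩

lemma qlen_additive {M N P : Submodule A V} (hPN : P ≤ N) (hNM : N ≤ M) :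
    qlen M P = qlen N P + qlen M N := by
  set CP := comap (Submodule.subtype M) P with hCP
  set CN := comap (Submodule.subtype M) N with hCN
  have hle : CP ≤ CN := fun x hx => hPN hx
  have key := plen_additive (X := ↥M ⧸ CP) (Submodule.map CP.mkQ CN)
  have e2 : ((↥M ⧸ CP) ⧸ (Submodule.map CP.mkQ CN)) ≃ₗ[A] (↥M ⧸ CN) :=
    Submodule.quotientQuotientEquivQuotient CP CN hle
  -- first isomorphism: N/(P∩N) ≅ map mkQ CN
  let g : ↥N →ₗ[A] (↥M ⧸ CP) := CP.mkQ ∘ₗ (Submodule.inclusion hNM)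
  have hker : LinearMap.ker g = comap (Submodule.subtype N) P := by
    ext ⟨x, hx⟩
    simp only [g, LinearMap.mem_ker, LinearMap.coe_comp, Function.comp_apply,
      Submodule.mkQ_apply, Submodule.Quotient.mk_eq_zero]
    rfl
  have hrange : LinearMap.range g = Submodule.map CP.mkQ CN := by
    ext y
    simp only [g, LinearMap.mem_range, Submodule.mem_map]
    constructor
    · rintro ⟨⟨x, hx⟩, rfl⟩
      exact ⟨⟨x, hNM hx⟩, hx, rfl⟩
    · rintro ⟨⟨x, hxM⟩, hx, rfl⟩
      exact ⟨⟨x, hx⟩, rfl⟩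
  have e1 : (↥N ⧸ comap (Submodule.subtype N) P) ≃ₗ[A] ↥(Submodule.map CP.mkQ CN) := by
    rw [← hker, ← hrange]
    exact g.quotKerEquivRange
  rw [qlen, qlen, qlen, ← hCP, ← hCN, key, plen_congr_s5 e1, plen_congr_s5 e2]

lemma qlen_map_injective (f : V →ₗ[A] W) (hf : Function.Injective f) (M N : Submodule A V) :
    qlen M N = qlen (Submodule.map f M) (Submodule.map f N) := by
  let e : ↥M ≃ₗ[A] ↥(Submodule.map f M) := Submodule.equivMapOfInjective f hf M
  have hmap : Submodule.map (e : ↥M →ₗ[A] ↥(Submodule.map f M))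
      (comap (Submodule.subtype M) N) = comap (Submodule.subtype (Submodule.map f M))
        (Submodule.map f N) := by
    ext ⟨y, hy⟩
    simp only [Submodule.mem_map, Submodule.mem_comap, Submodule.coe_subtype]
    constructor
    · rintro ⟨⟨x, hxM⟩, hx, hxe⟩
      exact ⟨x, hx, congrArg Subtype.val hxe⟩
    · rintro ⟨n, hn, hny⟩
      obtain ⟨x, hxM, hxy⟩ := hy
      refine ⟨⟨x, hxM⟩, ?_, ?_⟩
      · have : f n = f x := by rw [hny, hxy]
        have := hf this
        simpa [Submodule.mem_comap, ← this] using hn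
      · apply Subtype.ext
        exact hxy
  exact plen_congr_s5 (Submodule.Quotient.equiv _ _ e hmap)

end AuxModule

section AuxAlg
open Order Submodule IsLocalRing Ideal


section MulUnit
variable (A : Type*) {K : Type*} [CommRing A] [CommRing K] [Algebra A K]

noncomputable def mulUnit (c : Kˣ) : K ≃ₗ[A] K where
  toFun k := c * k
  invFun k := (c⁻¹ : Kˣ) * k
  map_add' := mul_add _
  map_smul' a k := by simp [Algebra.mul_smul_comm]
  left_inv k := by show (c⁻¹ : Kˣ) * ((c : K) * k) = k; rw [← mul_assoc, Units.inv_mul, one_mul]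
  right_inv k := by show (c : K) * ((c⁻¹ : Kˣ) * k) = k; rw [← mul_assoc, Units.mul_inv, one_mul]

@[simp] lemma mulUnit_apply (c : Kˣ) (k : K) : mulUnit A c k = c * k := rfl

lemma map_mulUnit_map (c d : Kˣ) (M : Submodule A K) :
    Submodule.map (mulUnit A c).toLinearMap (Submodule.map (mulUnit A d).toLinearMap M)
      = Submodule.map (mulUnit A (c * d)).toLinearMap M := by
  rw [← Submodule.map_comp]
  congr 1
  ext k
  simp [mulUnit, mul_assoc]

lemma map_mulUnit_one (M : Submodule A K) :
    Submodule.map (mulUnit A (1 : Kˣ)).toLinearMap M = M := by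
  have h : (mulUnit A (1 : Kˣ)).toLinearMap = LinearMap.id := by
    ext k; simp [mulUnit]
  rw [h, Submodule.map_id]

lemma map_mulUnit_inv_cancel (c : Kˣ) (M : Submodule A K) :
    Submodule.map (mulUnit A c).toLinearMap (Submodule.map (mulUnit A c⁻¹).toLinearMap M) = M := by
  rw [map_mulUnit_map, mul_inv_cancel, map_mulUnit_one]

lemma map_mulUnit_mul (c : Kˣ) (M N : Submodule A K) :
    Submodule.map (mulUnit A c).toLinearMap M * N
      = Submodule.map (mulUnit A c).toLinearMap (M * N) := by
  apply le_antisymm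
  · rw [Submodule.mul_le]
    rintro m hm n hn
    obtain ⟨m', hm', rfl⟩ := hm
    have : (mulUnit A c).toLinearMap m' * n = (mulUnit A c).toLinearMap (m' * n) := by
      simp [mul_assoc]
    rw [this]
    exact Submodule.mem_map_of_mem (Submodule.mul_mem_mul hm' hn)
  · rw [Submodule.map_le_iff_le_comap, Submodule.mul_le]
    intro m hm n hn
    simp only [Submodule.mem_comap]
    have : (mulUnit A c).toLinearMap (m * n) = ((mulUnit A c).toLinearMap m) * n := by
      simp [mul_assoc]
    rw [this]
    exact Submodule.mul_mem_mul (Submodule.mem_map_of_mem hm) hn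

end MulUnit

section Img
variable {A : Type*} [CommRing A]

noncomputable def Img (I : Ideal A) : Submodule A (FractionRing A) :=
  Submodule.map (Algebra.linearMap A (FractionRing A)) I

lemma mem_Img {I : Ideal A} {y : FractionRing A} :
    y ∈ Img I ↔ ∃ z ∈ I, algebraMap A (FractionRing A) z = y := by
  simp [Img, Submodule.mem_map]

lemma Img_mul (I J : Ideal A) : Img (I * J) = Img I * Img J := by
  have := Submodule.map_mul I J (Algebra.ofId A (FractionRing A))
  exact this

lemma Img_smul (c : (FractionRing A)ˣ) (a : A)
    (hc : (c : FractionRing A) = algebraMap A (FractionRing A) a) (I : Ideal A) :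
    Img (Ideal.span {a} * I) = Submodule.map (mulUnit A c).toLinearMap (Img I) := by
  ext y
  simp only [mem_Img, Submodule.mem_map]
  constructor
  · rintro ⟨z, hz, rfl⟩
    rw [Ideal.mem_span_singleton_mul] at hz
    obtain ⟨w, hw, rfl⟩ := hz
    refine ⟨algebraMap A (FractionRing A) w, mem_Img.2 ⟨w, hw, rfl⟩, ?_⟩
    simp [hc, _root_.map_mul]
  · rintro ⟨z, hz, rfl⟩
    obtain ⟨w, hw, rfl⟩ := mem_Img.1 hz
    refine ⟨a * w, Ideal.mem_span_singleton_mul.2 ⟨w, hw, rfl⟩, ?_⟩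
    simp [hc, _root_.map_mul]

lemma Img_mono {I J : Ideal A} (h : I ≤ J) : Img I ≤ Img J :=
  Submodule.map_mono h

end Img

section FN
variable {A : Type*} [CommRing A] [IsLocalRing A]



variable {x : A} (hx : x ∈ maximalIdeal A) (hreg : x ∈ nonZeroDivisors A)

noncomputable def xu (hreg : x ∈ nonZeroDivisors A) : (FractionRing A)ˣ :=
  (IsLocalization.map_units (FractionRing A) (⟨x, hreg⟩ : nonZeroDivisors A)).unit

omit [IsLocalRing A] in
lemma xu_val : ((xu hreg : (FractionRing A)ˣ) : FractionRing A) = algebraMap A (FractionRing A) x :=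
  IsUnit.unit_spec _

omit [IsLocalRing A] in
lemma xu_pow_val (k : ℕ) :
    (((xu hreg) ^ k : (FractionRing A)ˣ) : FractionRing A)
      = algebraMap A (FractionRing A) (x ^ k) := by
  rw [Units.val_pow_eq_pow_val, xu_val, map_pow]

noncomputable def Wsub (hreg : x ∈ nonZeroDivisors A) (r : ℕ) : Submodule A (FractionRing A) :=
  Submodule.map (mulUnit A (((xu hreg)⁻¹ : (FractionRing A)ˣ) ^ r)).toLinearMap
    (Img ((maximalIdeal A) ^ r))

variable {r : ℕ} (hred : maximalIdeal A ^ (r + 1) = Ideal.span {x} * maximalIdeal A ^ r)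
include hred

lemma R1 (j : ℕ) (hj : r ≤ j) :
    maximalIdeal A ^ (j + 1) = Ideal.span {x} * maximalIdeal A ^ j := by
  obtain ⟨k, rfl⟩ := Nat.exists_eq_add_of_le hj
  induction k with
  | zero => simpa using hred
  | succ k ih =>
    have h1 : maximalIdeal A ^ (r + (k + 1) + 1) = maximalIdeal A ^ (r + k + 1) * maximalIdeal A := by
      rw [← pow_succ]; ring_nf
    rw [h1, ih (Nat.le_add_right r k), mul_assoc, ← pow_succ]
    ring_nf

lemma R2 (n : ℕ) (hn : r ≤ n) (k : ℕ) :
    maximalIdeal A ^ (n + k) = Ideal.span {x ^ k} * maximalIdeal A ^ n := by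
  induction k with
  | zero => simp [Ideal.span_singleton_one]
  | succ k ih =>
    have h1 : maximalIdeal A ^ (n + (k + 1)) = Ideal.span {x} * maximalIdeal A ^ (n + k) := by
      rw [← add_assoc]; exact R1 hred (n + k) (le_trans hn (Nat.le_add_right n k))
    rw [h1, ih, ← mul_assoc, Ideal.span_singleton_mul_span_singleton, ← pow_succ']

lemma Img_pow_mul_shift (n : ℕ) (hn : r ≤ n) (k : ℕ) :
    Img (maximalIdeal A ^ (n + k))
      = Submodule.map (mulUnit A ((xu hreg) ^ k)).toLinearMap (Img (maximalIdeal A ^ n)) := by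
  rw [R2 hred n hn k]
  exact Img_smul _ _ (xu_pow_val hreg k) _

lemma Wsub_mul : Wsub hreg r * Wsub hreg r = Wsub hreg r := by
  classical
  set u := (xu hreg : (FractionRing A)ˣ)
  set M := Img ((maximalIdeal A : Ideal A) ^ r)
  have h1 : Wsub hreg r * Wsub hreg r
      = Submodule.map (mulUnit A (u⁻¹ ^ r)).toLinearMap
          (Submodule.map (mulUnit A (u⁻¹ ^ r)).toLinearMap (M * M)) := by
    rw [Wsub, map_mulUnit_mul]
    congr 1
    rw [mul_comm, map_mulUnit_mul]
  have h2 : M * M = Submodule.map (mulUnit A (u ^ r)).toLinearMap M := by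
    rw [← Img_mul, ← pow_add, Img_pow_mul_shift hreg hred r le_rfl r]
  rw [h1, h2, map_mulUnit_map, map_mulUnit_map]
  have h3 : u⁻¹ ^ r * u⁻¹ ^ r * u ^ r = u⁻¹ ^ r := by group
  rw [h3]
  rfl

omit hred in
lemma one_mem_Wsub (hx : x ∈ maximalIdeal A) : (1 : FractionRing A) ∈ Wsub hreg r := by
  refine ⟨algebraMap A (FractionRing A) (x ^ r), mem_Img.2 ⟨x ^ r, Ideal.pow_mem_pow hx r, rfl⟩, ?_⟩
  show (((xu hreg)⁻¹ ^ r : (FractionRing A)ˣ) : FractionRing A)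
      * algebraMap A (FractionRing A) (x ^ r) = 1
  rw [← xu_pow_val hreg r, ← Units.val_mul, ← mul_pow, inv_mul_cancel, one_pow, Units.val_one]

lemma mul_mem_Wsub {y z : FractionRing A} (hy : y ∈ Wsub hreg r) (hz : z ∈ Wsub hreg r) :
    y * z ∈ Wsub hreg r := by
  rw [← Wsub_mul hreg hred]
  exact Submodule.mul_mem_mul hy hz

noncomputable def Bsub (hx : x ∈ maximalIdeal A) : Subalgebra A (FractionRing A) :=
  (Wsub hreg r).toSubalgebra (one_mem_Wsub hreg hx)
    (fun _ _ hy hz => mul_mem_Wsub hreg hred hy hz)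

lemma firstNbhd_le_Bsub (hx : x ∈ maximalIdeal A) :
    firstNbhd A x ≤ Bsub hreg hred hx := by
  apply Algebra.adjoin_le
  rintro q ⟨a, ham, hq⟩
  show q ∈ Wsub hreg r
  have hnt : Nontrivial (FractionRing A) :=
    (IsFractionRing.injective A (FractionRing A)).nontrivial
  rw [← xu_val hreg] at hq
  cases r with
  | zero =>
    have hm : maximalIdeal A = Ideal.span {x} := by simpa using hred
    rw [hm, Ideal.mem_span_singleton'] at ham
    obtain ⟨b, rfl⟩ := ham
    have hq' : q = algebraMap A (FractionRing A) b := by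
      have h2 : q * (xu hreg : FractionRing A)
          = algebraMap A (FractionRing A) b * (xu hreg : FractionRing A) := by
        rw [hq, _root_.map_mul, xu_val hreg]
      calc q = q * (xu hreg : FractionRing A) * (((xu hreg)⁻¹ : (FractionRing A)ˣ) : _) :=
            (Units.mul_inv_cancel_right _ _).symm
        _ = algebraMap A (FractionRing A) b * (xu hreg : FractionRing A)
            * (((xu hreg)⁻¹ : (FractionRing A)ˣ) : _) := by rw [h2]
        _ = algebraMap A (FractionRing A) b := Units.mul_inv_cancel_right _ _
    refine ⟨algebraMap A (FractionRing A) b, mem_Img.2 ⟨b, by simp, rfl⟩, ?_⟩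
    show (((xu hreg)⁻¹ ^ 0 : (FractionRing A)ˣ) : FractionRing A)
        * algebraMap A (FractionRing A) b = q
    rw [pow_zero, Units.val_one, one_mul, hq']
  | succ r' =>
    have hmem : x ^ r' * a ∈ maximalIdeal A ^ (r' + 1) := by
      rw [pow_succ]
      exact Ideal.mul_mem_mul (Ideal.pow_mem_pow hx r') ham
    refine ⟨algebraMap A (FractionRing A) (x ^ r' * a), mem_Img.2 ⟨_, hmem, rfl⟩, ?_⟩
    show (((xu hreg)⁻¹ ^ (r' + 1) : (FractionRing A)ˣ) : FractionRing A)
        * algebraMap A (FractionRing A) (x ^ r' * a) = q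
    have huq : (((xu hreg)⁻¹ : (FractionRing A)ˣ) : FractionRing A)
        * algebraMap A (FractionRing A) a = q := by
      calc (((xu hreg)⁻¹ : (FractionRing A)ˣ) : FractionRing A) * algebraMap A (FractionRing A) a
          = (((xu hreg)⁻¹ : (FractionRing A)ˣ) : FractionRing A)
            * (q * (xu hreg : FractionRing A)) := by rw [hq]
        _ = q * ((xu hreg : FractionRing A) * (((xu hreg)⁻¹ : (FractionRing A)ˣ) : _)) := by ring
        _ = q := by rw [Units.mul_inv, mul_one]
    rw [_root_.map_mul, ← xu_pow_val hreg r', ← mul_assoc, ← Units.val_mul]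
    have hu2 : ((xu hreg)⁻¹ ^ (r' + 1) * xu hreg ^ r' : (FractionRing A)ˣ) = (xu hreg)⁻¹ := by
      group
    rw [hu2, huq]

omit hred in
lemma pow_mem_adjoin (k : ℕ) :
    ∀ z ∈ (maximalIdeal A) ^ k,
      (((xu hreg)⁻¹ ^ k : (FractionRing A)ˣ) : FractionRing A)
        * algebraMap A (FractionRing A) z ∈ firstNbhd A x := by
  induction k with
  | zero =>
    intro z _
    rw [pow_zero, Units.val_one, one_mul]
    exact Subalgebra.algebraMap_mem _ z
  | succ k ih =>
    intro z hz
    rw [pow_succ] at hz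
    refine Submodule.mul_induction_on hz ?_ ?_
    · intro p hp q hq
      have heq : (((xu hreg)⁻¹ ^ (k + 1) : (FractionRing A)ˣ) : FractionRing A)
          * algebraMap A (FractionRing A) (p * q)
          = ((((xu hreg)⁻¹ ^ k : (FractionRing A)ˣ) : FractionRing A)
              * algebraMap A (FractionRing A) p)
            * ((((xu hreg)⁻¹ : (FractionRing A)ˣ) : FractionRing A)
              * algebraMap A (FractionRing A) q) := by
        rw [_root_.map_mul, pow_succ, Units.val_mul]
        ring
      rw [heq]
      refine mul_mem (ih p hp) (Algebra.subset_adjoin ⟨q, hq, ?_⟩)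
      rw [← xu_val hreg]
      calc (((xu hreg)⁻¹ : (FractionRing A)ˣ) : FractionRing A)
            * algebraMap A (FractionRing A) q * (xu hreg : FractionRing A)
          = algebraMap A (FractionRing A) q
            * ((xu hreg : FractionRing A) * (((xu hreg)⁻¹ : (FractionRing A)ˣ) : _)) := by ring
        _ = algebraMap A (FractionRing A) q := by rw [Units.mul_inv, mul_one]
    · intro y1 y2 h1 h2
      have heq : (((xu hreg)⁻¹ ^ (k + 1) : (FractionRing A)ˣ) : FractionRing A)
          * algebraMap A (FractionRing A) (y1 + y2)
          = (((xu hreg)⁻¹ ^ (k + 1) : (FractionRing A)ˣ) : FractionRing A)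
              * algebraMap A (FractionRing A) y1
            + (((xu hreg)⁻¹ ^ (k + 1) : (FractionRing A)ˣ) : FractionRing A)
              * algebraMap A (FractionRing A) y2 := by
        rw [map_add, mul_add]
      rw [heq]
      exact add_mem h1 h2

lemma Bsub_le_firstNbhd (hx : x ∈ maximalIdeal A) :
    Bsub hreg hred hx ≤ firstNbhd A x := by
  intro y hy
  obtain ⟨z0, hz0, rfl⟩ := hy
  obtain ⟨z, hz, rfl⟩ := mem_Img.1 hz0
  exact pow_mem_adjoin hreg r z hz

lemma firstNbhd_toSubmodule (hx : x ∈ maximalIdeal A) :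
    Subalgebra.toSubmodule (firstNbhd A x) = Wsub hreg r := by
  have h := le_antisymm (firstNbhd_le_Bsub hreg hred hx) (Bsub_le_firstNbhd hreg hred hx)
  rw [h]
  rfl

end FN

end AuxAlg


section Glue
open Submodule IsLocalRing Ideal

lemma lenQ_eq_qlen {A : Type*} [CommRing A] (I J : Ideal A) : lenQ I J = qlen I J := rfl

lemma slen_eq_qlen {A Q : Type*} [CommRing A] [CommRing Q] [Algebra A Q]
    (M N : Submodule A Q) : slen M N = qlen M N := rfl

lemma mImg_eq {A : Type*} [CommRing A] [IsLocalRing A] (n : ℕ) :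
    mImg A n = Img ((maximalIdeal A) ^ n) := by
  rw [mImg, Img]
  conv_rhs => rw [← Ideal.span_eq ((maximalIdeal A) ^ n), ← Ideal.submodule_span_eq,
    Submodule.map_span]
  rfl

lemma Img_def {A : Type*} [CommRing A] (I : Ideal A) :
    Img I = Submodule.map (Algebra.linearMap A (FractionRing A)) I := rfl

lemma enat_cancel_right {a b c : ℕ∞} (ha : a ≠ ⊤) (h : a + b = c + a) : b = c := by
  rw [add_comm c a] at h
  exact WithTop.add_left_cancel ha h

end Glue

theorem stmt5 {A : Type*} [CommRing A] [IsLocalRing A] [IsNoetherianRing A]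
    [Infinite (IsLocalRing.ResidueField A)]
    (hdim : ringKrullDim A = 1)
    (x : A) (hx : x ∈ maximalIdeal A) (hreg : x ∈ nonZeroDivisors A)
    (r : ℕ)
    (hred : maximalIdeal A ^ (r + 1) = Ideal.span {x} * maximalIdeal A ^ r)
    (hrmin : ∀ s < r, maximalIdeal A ^ (s + 1) ≠ Ideal.span {x} * maximalIdeal A ^ s)
    (e : ℕ) (he : plen A (A ⧸ Ideal.span {x}) = (e : ℕ∞))
    (ρ : ℕ)
    (hρ : ∃ N : ℕ, ∀ n ≥ N,
      (Finset.range (n + 1)).sum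
          (fun i => lenQ (maximalIdeal A ^ i) (maximalIdeal A ^ (i + 1)))
        = (e : ℕ∞) * ((n : ℕ∞) + 1) - (ρ : ℕ∞)) :
    (∀ n : ℕ, 1 ≤ n →
      slen (Subalgebra.toSubmodule (firstNbhd A x))
          (mImg A n * Subalgebra.toSubmodule (firstNbhd A x)) = (n : ℕ∞) * (e : ℕ∞)) ∧
    slen (Subalgebra.toSubmodule (firstNbhd A x)) (1 : Submodule A (FractionRing A))
      = (ρ : ℕ∞) := by
  classical
  obtain ⟨N0, hN0⟩ := hρ
  simp only [lenQ_eq_qlen] at hN0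
  set m : Ideal A := maximalIdeal A with hm
  -- finiteness of Hilbert function steps
  have hfinRHS : ∀ n : ℕ, ((e : ℕ∞) * ((n : ℕ∞) + 1) - (ρ : ℕ∞)) ≠ ⊤ := by
    intro n
    have h1 : ((e * (n + 1) : ℕ) : ℕ∞) ≠ ⊤ := ENat.coe_ne_top _
    push_cast at h1
    exact fun h => h1 (top_le_iff.1 (h ▸ tsub_le_self))
  have hfin1 : ∀ i : ℕ, qlen (m ^ i) (m ^ (i + 1)) ≠ ⊤ := by
    intro i
    have hsum := hN0 (max N0 i) (le_max_left _ _)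
    have hle : qlen (m ^ i) (m ^ (i + 1)) ≤ (Finset.range (max N0 i + 1)).sum
        (fun j => qlen (m ^ j) (m ^ (j + 1))) := by
      refine Finset.single_le_sum (f := fun j => qlen (m ^ j) (m ^ (j + 1)))
        (fun j _ => zero_le) (Finset.mem_range.2 (by omega))
    rw [hsum] at hle
    exact fun h => (hfinRHS (max N0 i)) (top_le_iff.1 (h ▸ hle))
  -- telescoping
  have htel : ∀ n : ℕ, qlen (⊤ : Ideal A) (m ^ n)
      = (Finset.range n).sum (fun i => qlen (m ^ i) (m ^ (i + 1))) := by
    intro n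
    induction n with
    | zero =>
      rw [pow_zero, Ideal.one_eq_top]
      simpa using qlen_eq_zero (⊤ : Ideal A) ⊤ le_rfl
    | succ n ih =>
      rw [Finset.sum_range_succ, ← ih,
        qlen_additive (P := m ^ (n + 1)) (N := m ^ n) (M := (⊤ : Ideal A))
          (Ideal.pow_le_pow_right (by omega)) le_top]
      exact add_comm _ _
  have hfinTop : ∀ n : ℕ, qlen (⊤ : Ideal A) (m ^ n) ≠ ⊤ := by
    intro n
    rw [htel n]
    exact WithTop.sum_ne_top.2 fun i _ => hfin1 i
  -- λ(m^j / x m^j) = e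
  have hstep : ∀ j : ℕ, qlen (m ^ j) (Ideal.span {x} * m ^ j) = (e : ℕ∞) := by
    intro j
    set f : A →ₗ[A] A := x • (LinearMap.id) with hf
    have hfa : ∀ a : A, f a = x * a := fun a => by simp [hf, smul_eq_mul]
    have hinj : Function.Injective f := by
      intro a b hab
      rw [hfa, hfa] at hab
      have h0 : (a - b) * x = 0 := by linear_combination hab
      have h1 := (mem_nonZeroDivisors_iff.1 hreg).2 _ h0
      exact sub_eq_zero.1 h1
    have hmt : Submodule.map f ⊤ = Ideal.span {x} := by
      ext y
      simp only [Submodule.mem_map, Submodule.mem_top, true_and]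
      rw [Ideal.mem_span_singleton']
      constructor
      · rintro ⟨a, rfl⟩; exact ⟨a, by rw [hfa]; ring⟩
      · rintro ⟨a, ha⟩; exact ⟨a, by rw [hfa, ← ha]; ring⟩
    have hmj : Submodule.map f (m ^ j) = Ideal.span {x} * m ^ j := by
      ext y
      simp only [Submodule.mem_map]
      rw [Ideal.mem_span_singleton_mul]
      constructor
      · rintro ⟨a, ha, rfl⟩; exact ⟨a, ha, (hfa a).symm⟩
      · rintro ⟨a, ha, h⟩; exact ⟨a, ha, by rw [hfa, h]⟩
    have hmapq : qlen (⊤ : Ideal A) (m ^ j) = qlen (Ideal.span {x}) (Ideal.span {x} * m ^ j) := by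
      rw [qlen_map_injective f hinj ⊤ (m ^ j), hmt, hmj]
    have c1 := qlen_additive (P := Ideal.span {x} * m ^ j) (N := m ^ j) (M := (⊤ : Ideal A))
      Ideal.mul_le_right le_top
    have c2 := qlen_additive (P := Ideal.span {x} * m ^ j) (N := Ideal.span {x})
      (M := (⊤ : Ideal A)) Ideal.mul_le_left le_top
    rw [← hmapq] at c2
    have hex : qlen (⊤ : Ideal A) (Ideal.span {x}) = (e : ℕ∞) := by
      rw [qlen_top]; exact he
    rw [hex] at c2
    rw [c2] at c1
    exact (enat_cancel_right (hfinTop j) c1).symm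
  -- λ(m^r / m^{r+n}) = n e
  have hmain1 : ∀ n : ℕ, qlen (m ^ r) (m ^ (r + n)) = (n : ℕ∞) * e := by
    intro n
    induction n with
    | zero => simpa using qlen_eq_zero (m ^ r) (m ^ r) le_rfl
    | succ n ih =>
      have hch1 : m ^ (r + n + 1) ≤ m ^ (r + n) := Ideal.pow_le_pow_right (by omega)
      have hch2 : m ^ (r + n) ≤ m ^ r := Ideal.pow_le_pow_right (by omega)
      have hq := qlen_additive hch1 hch2
      rw [R1 hred (r + n) (by omega), hstep (r + n), ih] at hq
      rw [show r + (n + 1) = (r + n) + 1 by omega, R1 hred (r + n) (by omega), hq]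
      push_cast
      ring
  -- the first neighborhood ring
  have hW : Subalgebra.toSubmodule (firstNbhd A x) = Wsub hreg r :=
    firstNbhd_toSubmodule hreg hred hx
  have hPM : ∀ n : ℕ, Img (m ^ n) * Wsub hreg r
      = Submodule.map (mulUnit A ((xu hreg)⁻¹ ^ r)).toLinearMap (Img (m ^ (r + n))) := by
    intro n
    rw [Wsub, mul_comm, map_mulUnit_mul]
    congr 1
    rw [← Img_mul, ← pow_add]
  have hφinj : Function.Injective (Algebra.linearMap A (FractionRing A)) :=
    IsFractionRing.injective A (FractionRing A)
  have hinvpow : ((xu hreg)⁻¹ ^ r : (FractionRing A)ˣ) = ((xu hreg) ^ r)⁻¹ := inv_pow _ _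
  have hSL : ∀ n : ℕ, qlen (Wsub hreg r)
      (Submodule.map (mulUnit A ((xu hreg)⁻¹ ^ r)).toLinearMap (Img (m ^ (r + n))))
        = qlen (m ^ r) (m ^ (r + n)) := by
    intro n
    have hinj2 : Function.Injective
        ((mulUnit A ((xu hreg) ^ r : (FractionRing A)ˣ)).toLinearMap
          : FractionRing A →ₗ[A] FractionRing A) :=
      (mulUnit A _).injective
    rw [qlen_map_injective _ hinj2]
    have e1 : Submodule.map (mulUnit A ((xu hreg) ^ r : (FractionRing A)ˣ)).toLinearMap
        (Wsub hreg r) = Img (m ^ r) := by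
      rw [Wsub, hinvpow]
      exact map_mulUnit_inv_cancel A _ _
    have e2 : Submodule.map (mulUnit A ((xu hreg) ^ r : (FractionRing A)ˣ)).toLinearMap
        (Submodule.map (mulUnit A ((xu hreg)⁻¹ ^ r)).toLinearMap (Img (m ^ (r + n))))
          = Img (m ^ (r + n)) := by
      rw [hinvpow]
      exact map_mulUnit_inv_cancel A _ _
    rw [e1, e2]
    exact (qlen_map_injective _ hφinj (m ^ r) (m ^ (r + n))).symm
  have hslen : ∀ n : ℕ, qlen (Wsub hreg r) (Img (m ^ n) * Wsub hreg r) = (n : ℕ∞) * e := by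
    intro n
    rw [hPM n, hSL n, hmain1 n]
  constructor
  · intro n _
    rw [slen_eq_qlen, hW, mImg_eq]
    exact hslen n
  · -- second statement
    have hnt_res : Nontrivial (A ⧸ Ideal.span {x}) := by
      refine Submodule.Quotient.nontrivial_iff.2 ?_
      intro htop
      exact (IsLocalRing.mem_maximalIdeal x).1 hx
        (Ideal.span_singleton_eq_top.1 htop)
    have he1 : 1 ≤ e := by
      by_contra h
      have he0 : e = 0 := by omega
      have := plen_pos (A := A) (X := A ⧸ Ideal.span {x})
      rw [he, he0] at this
      simp at this
    set n' : ℕ := max N0 (max r ρ) with hn'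
    set n : ℕ := n' + 1 with hndef
    have hrn : r ≤ n := by omega
    have hρn : ρ ≤ n := by omega
    have h1le : (1 : Submodule A (FractionRing A)) ≤ Wsub hreg r := by
      rw [Submodule.one_eq_span, Submodule.span_le, Set.singleton_subset_iff]
      exact one_mem_Wsub hreg hx
    have hImgTop : (1 : Submodule A (FractionRing A)) = Img (⊤ : Ideal A) := by
      rw [Submodule.one_eq_range, Img_def]
      exact (Submodule.map_top _).symm
    have hImgn_eq : Img (m ^ n) = Img (m ^ n) * Wsub hreg r := by
      rw [hPM n, add_comm r n, Img_pow_mul_shift hreg hred n hrn r, map_mulUnit_map]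
      have hu1 : ((xu hreg)⁻¹ ^ r * (xu hreg) ^ r : (FractionRing A)ˣ) = 1 := by group
      rw [hu1, map_mulUnit_one]
    have hqImgn : qlen (Wsub hreg r) (Img (m ^ n)) = (n : ℕ∞) * e := by
      rw [hImgn_eq]
      exact hslen n
    have hadd := qlen_additive (P := Img (m ^ n)) (N := (1 : Submodule A (FractionRing A)))
      (M := Wsub hreg r) (by rw [hImgTop]; exact Img_mono le_top) h1le
    have hq1 : qlen (1 : Submodule A (FractionRing A)) (Img (m ^ n))
        = qlen (⊤ : Ideal A) (m ^ n) := by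
      rw [hImgTop]
      exact (qlen_map_injective _ hφinj ⊤ (m ^ n)).symm
    have hσ := hN0 n' (le_max_left _ _)
    have hcast : ((n' : ℕ∞) + 1) = (n : ℕ∞) := by rw [hndef, Nat.cast_add, Nat.cast_one]
    rw [hcast] at hσ
    have hqtop : qlen (⊤ : Ideal A) (m ^ n) = (e : ℕ∞) * (n : ℕ∞) - (ρ : ℕ∞) := by
      rw [htel n]
      rw [show (Finset.range n).sum (fun i => qlen (m ^ i) (m ^ (i + 1)))
        = (Finset.range (n' + 1)).sum (fun i => qlen (m ^ i) (m ^ (i + 1))) from rfl]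
      rw [hσ]
    have hρle : ρ ≤ e * n := le_trans hρn (Nat.le_mul_of_pos_left n (by omega))
    have hcast2 : (e : ℕ∞) * (n : ℕ∞) - (ρ : ℕ∞) = ((e * n - ρ : ℕ) : ℕ∞) := by
      rw [ENat.coe_sub, Nat.cast_mul]
    rw [hqImgn, hq1, hqtop, hcast2] at hadd
    rw [slen_eq_qlen, hW]
    -- hadd : ↑n * ↑e = ↑(e*n-ρ) + qlen W 1
    have hfinq : qlen (Wsub hreg r) (1 : Submodule A (FractionRing A)) ≠ ⊤ := by
      intro h
      rw [h, add_top] at hadd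
      have : ((n * e : ℕ) : ℕ∞) = ⊤ := by push_cast; exact hadd
      exact (ENat.coe_ne_top _) this
    lift (qlen (Wsub hreg r) (1 : Submodule A (FractionRing A))) to ℕ using hfinq with q hq
    have hfin : (n : ℕ) * e = (e * n - ρ) + q := by exact_mod_cast hadd
    rw [Nat.mul_comm n e] at hfin
    have : q = ρ := by omega
    exact_mod_cast congrArg (Nat.cast : ℕ → ℕ∞) this
end

section
/- Let (A, m) be a one-dimensional Cohen-Macaulay local ring with infinite residue field, reduction number r, and minimal reduction xA of m. Then (x^r A) ∩ m^{r+i} = x^r · (m^r : x^{r−i}) for 0 ≤ i ≤ r. -/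
open IsLocalRing Ideal Submodule

theorem stmt10 {A : Type*} [CommRing A] [IsLocalRing A] [IsNoetherianRing A]
    [Infinite (IsLocalRing.ResidueField A)]
    (hdim : ringKrullDim A = 1)
    (x : A) (hx : x ∈ maximalIdeal A) (hreg : x ∈ nonZeroDivisors A)
    (r : ℕ)
    (hred : maximalIdeal A ^ (r + 1) = Ideal.span {x} * maximalIdeal A ^ r)
    (hrmin : ∀ s < r, maximalIdeal A ^ (s + 1) ≠ Ideal.span {x} * maximalIdeal A ^ s) :
    ∀ i ≤ r, Ideal.span {x ^ r} ⊓ maximalIdeal A ^ (r + i)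
      = Ideal.span {x ^ r} * ((maximalIdeal A ^ r).colon (Ideal.span {x ^ (r - i)})) := by
  have key : ∀ k : ℕ, maximalIdeal A ^ (r + k) = Ideal.span {x ^ k} * maximalIdeal A ^ r := by
    intro k
    induction k with
    | zero => simp
    | succ k ih =>
      rw [show r + (k + 1) = (r + k) + 1 from by omega, pow_succ, ih, mul_assoc,
        ← pow_succ, hred, pow_succ x, ← Ideal.span_singleton_mul_span_singleton, mul_assoc]
  intro i hi
  have hxsplit : x ^ r = x ^ i * x ^ (r - i) := by
    rw [← pow_add]; congr 1; omega
  apply le_antisymm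
  · intro y hy
    obtain ⟨hy1, hy2⟩ := Submodule.mem_inf.mp hy
    rw [Ideal.mem_span_singleton] at hy1
    obtain ⟨a, ha⟩ := hy1
    rw [key i, Ideal.mem_span_singleton_mul] at hy2
    obtain ⟨c, hc, hcy⟩ := hy2
    have hcancel : x ^ (r - i) * a = c := by
      have hxi : (x ^ i : A) ∈ nonZeroDivisors A := pow_mem hreg i
      rw [← mul_cancel_right_mem_nonZeroDivisors hxi]
      calc x ^ (r - i) * a * x ^ i = x ^ r * a := by rw [hxsplit]; ring
        _ = c * x ^ i := by rw [← ha, ← hcy]; ring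
    rw [Ideal.mem_span_singleton_mul]
    refine ⟨a, ?_, ha.symm⟩
    rw [Ideal.mem_colon_span_singleton, mul_comm, hcancel]
    exact hc
  · intro y hy
    rw [Ideal.mem_span_singleton_mul] at hy
    obtain ⟨z, hz, hzy⟩ := hy
    rw [Ideal.mem_colon_span_singleton] at hz
    refine Submodule.mem_inf.mpr ⟨?_, ?_⟩
    · rw [Ideal.mem_span_singleton]
      exact ⟨z, hzy.symm⟩
    · rw [key i, Ideal.mem_span_singleton_mul]
      exact ⟨z * x ^ (r - i), hz, by rw [← hzy, hxsplit]; ring⟩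
end

section
/- Let S be a numerical semigroup with multiplicity e and maximal ideal M = S \ {0}. For each n ≥ 0 let Ap(nM) denote the Apery set of the ideal nM with respect to e (the set of smallest elements of nM in each residue class modulo e), written Ap(nM) = {w_{n,0}, …, w_{n,e−1}} with w_{n,i} ≡ w_{0,i} (mod e). Then for each fixed i and each n, w_{n+1,i} − w_{n,i} ∈ {0, e}, and w_{n+1,i} = w_{n,i} + e for all n ≥ r, where r is the reduction number of M (the least r with (r+1)M = e + rM). -/
open Pointwise

/-- the `n`-fold sum `nM = M + ⋯ + M` of the maximal ideal `M = S \ {0}` of a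
numerical semigroup `S`, with `0M = S`. -/
def nIdeal (S : AddSubmonoid ℕ) : ℕ → Set ℕ
  | 0 => (S : Set ℕ)
  | n + 1 => (((S : Set ℕ) \ {0}) + nIdeal S n)

lemma nIdeal_succ' (S : AddSubmonoid ℕ) (n : ℕ) :
    nIdeal S (n+1) = ((S : Set ℕ) \ {0}) + nIdeal S n := rfl

lemma nIdeal_antitone (S : AddSubmonoid ℕ) (n : ℕ) :
    nIdeal S (n+1) ⊆ nIdeal S n := by
  induction n with
  | zero =>
    intro x hx
    obtain ⟨a, ha, b, hb, rfl⟩ := hx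
    exact S.add_mem ha.1 hb
  | succ n ih =>
    rw [nIdeal_succ' S (n+1), nIdeal_succ' S n]
    exact Set.add_subset_add_left ih

lemma nIdeal_shift (S : AddSubmonoid ℕ) (e r : ℕ)
    (hr : nIdeal S (r + 1) = (fun k => e + k) '' nIdeal S r) :
    ∀ n, r ≤ n → nIdeal S (n + 1) = (fun k => e + k) '' nIdeal S n := by
  intro n hn
  induction n, hn using Nat.le_induction with
  | base => exact hr
  | succ n hn ih =>
    rw [nIdeal_succ' S (n+1)]
    conv_lhs => rw [ih]
    rw [nIdeal_succ' S n, ← Set.singleton_add, ← Set.singleton_add, add_left_comm]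

lemma sInf_image_shift (e i : ℕ) (B : Set ℕ)
    (hBne : {k ∈ B | k % e = i}.Nonempty) :
    sInf {k ∈ (fun k => e + k) '' B | k % e = i} =
      sInf {k ∈ B | k % e = i} + e := by
  have hB1 := (Nat.sInf_mem hBne).1
  have hB2 := (Nat.sInf_mem hBne).2
  have hAne : {k ∈ (fun k => e + k) '' B | k % e = i}.Nonempty := by
    refine ⟨e + sInf {k ∈ B | k % e = i}, ⟨_, hB1, rfl⟩, ?_⟩
    rwa [Nat.add_mod_left]
  apply le_antisymm
  · apply Nat.sInf_le
    refine ⟨⟨sInf {k ∈ B | k % e = i}, hB1, Nat.add_comm e _⟩, ?_⟩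
    rwa [Nat.add_mod_right]
  · obtain ⟨⟨m, hm, hme⟩, h2⟩ := Nat.sInf_mem hAne
    have hme' : e + m = sInf {k ∈ (fun k => e + k) '' B | k % e = i} := hme
    have hmi : m % e = i := by
      rw [← hme', Nat.add_mod_left] at h2
      exact h2
    have : sInf {k ∈ B | k % e = i} ≤ m := Nat.sInf_le ⟨hm, hmi⟩
    omega

theorem stmt15 (S : AddSubmonoid ℕ) (hfin : (Set.univ \ (S : Set ℕ)).Finite)
    (e : ℕ) (he : e = sInf ((S : Set ℕ) \ {0}))
    (r : ℕ)
    (hr : nIdeal S (r + 1) = (fun k => e + k) '' nIdeal S r)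
    (hrmin : ∀ s < r, nIdeal S (s + 1) ≠ (fun k => e + k) '' nIdeal S s) :
    ∀ i < e, ∀ n : ℕ,
      (sInf {k ∈ nIdeal S (n + 1) | k % e = i} = sInf {k ∈ nIdeal S n | k % e = i} ∨
        sInf {k ∈ nIdeal S (n + 1) | k % e = i} = sInf {k ∈ nIdeal S n | k % e = i} + e) ∧
      (r ≤ n →
        sInf {k ∈ nIdeal S (n + 1) | k % e = i} = sInf {k ∈ nIdeal S n | k % e = i} + e) := by
  have heS : e ∈ (S : Set ℕ) \ {0} := by
    rw [he]
    apply Nat.sInf_mem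
    obtain ⟨N, hN⟩ := hfin.bddAbove
    refine ⟨N + 1, ?_, ?_⟩
    · by_contra h
      exact absurd (hN ⟨trivial, h⟩) (by omega)
    · simp
  have hepos : 0 < e := by
    have := heS.2
    simp only [Set.mem_singleton_iff] at this
    omega
  have hmul : ∀ n : ℕ, ∀ s ∈ (S : Set ℕ), n * e + s ∈ nIdeal S n := by
    intro n
    induction n with
    | zero => intro s hs; simpa [nIdeal] using hs
    | succ n ih =>
      intro s hs
      have h : (n + 1) * e + s = e + (n * e + s) := by ring
      rw [h, nIdeal_succ']
      exact Set.add_mem_add heS (ih s hs)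
  have hne : ∀ i < e, ∀ n : ℕ, {k ∈ nIdeal S n | k % e = i}.Nonempty := by
    intro i hi n
    obtain ⟨N, hN⟩ := hfin.bddAbove
    have hsS : (N + 1) * e + i ∈ (S : Set ℕ) := by
      by_contra h
      have := hN (⟨trivial, h⟩ : (N+1)*e + i ∈ Set.univ \ (S : Set ℕ))
      nlinarith
    refine ⟨n * e + ((N + 1) * e + i), hmul n _ hsS, ?_⟩
    have h1 : n * e + ((N + 1) * e + i) = i + (n + (N + 1)) * e := by ring
    rw [h1, Nat.add_mul_mod_self_right, Nat.mod_eq_of_lt hi]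
  intro i hi n
  have hAne := hne i hi (n + 1)
  have hBne := hne i hi n
  have hBA : sInf {k ∈ nIdeal S n | k % e = i} ≤
      sInf {k ∈ nIdeal S (n + 1) | k % e = i} := by
    apply Nat.sInf_le
    have h := Nat.sInf_mem hAne
    exact ⟨nIdeal_antitone S n h.1, h.2⟩
  have hub : sInf {k ∈ nIdeal S (n + 1) | k % e = i} ≤
      sInf {k ∈ nIdeal S n | k % e = i} + e := by
    apply Nat.sInf_le
    refine ⟨?_, ?_⟩
    · rw [nIdeal_succ']
      exact Set.mem_add.mpr ⟨e, heS, sInf {k ∈ nIdeal S n | k % e = i},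
        (Nat.sInf_mem hBne).1, by omega⟩
    · rw [Nat.add_mod_right]
      exact (Nat.sInf_mem hBne).2
  constructor
  · have hmodA : sInf {k ∈ nIdeal S (n + 1) | k % e = i} % e = i := (Nat.sInf_mem hAne).2
    have hmodB : sInf {k ∈ nIdeal S n | k % e = i} % e = i := (Nat.sInf_mem hBne).2
    have hmeq : sInf {k ∈ nIdeal S n | k % e = i} ≡
        sInf {k ∈ nIdeal S (n + 1) | k % e = i} [MOD e] := by
      unfold Nat.ModEq; rw [hmodA, hmodB]
    obtain ⟨c, hc⟩ := (Nat.modEq_iff_dvd' hBA).mp hmeq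
    have hc1 : c ≤ 1 := by
      by_contra h
      push_neg at h
      have : e * 2 ≤ e * c := Nat.mul_le_mul_left e h
      omega
    interval_cases c <;> omega
  · intro hrn
    rw [nIdeal_shift S e r hr n hrn]
    exact sInf_image_shift e i (nIdeal S n) hBne
end

section
/- Let S be a numerical semigroup minimally generated by two elements e and w (with e the multiplicity, gcd(e,w)=1). Then the reduction number of the maximal ideal M = S \ {0} is e − 1, and for every n ≥ 1 the Apery set of nM with respect to e is Ap(nM) = {w_{n,0}, w_{n,1}, ..., w_{n,e−1}}, where w_{n,0} = n·e and, for 1 ≤ i ≤ e−1, w_{n,i} = i·w if n ≤ i and w_{n,i} = i·w + (n−i)·e if n ≥ i. -/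
open Pointwise

theorem nIdeal_mem (e w : ℕ) (he2 : 2 ≤ e) (hew : e < w)
    (S : AddSubmonoid ℕ) (hS : S = AddSubmonoid.closure {e, w}) :
    ∀ n x, x ∈ nIdeal S n ↔ ∃ a b, x = a * e + b * w ∧ n ≤ a + b := by
  intro n
  induction n with
  | zero =>
    intro x
    subst hS
    simp only [nIdeal, SetLike.mem_coe, AddSubmonoid.mem_closure_pair, smul_eq_mul,
      Nat.zero_le, and_true]
    constructor
    · rintro ⟨a, b, h⟩; exact ⟨a, b, h.symm⟩
    · rintro ⟨a, b, h⟩; exact ⟨a, b, h.symm⟩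
  | succ n ih =>
    intro x
    simp only [nIdeal, Set.mem_add]
    constructor
    · rintro ⟨y, ⟨hy, hy0⟩, z, hz, rfl⟩
      subst hS
      rw [SetLike.mem_coe, AddSubmonoid.mem_closure_pair] at hy
      obtain ⟨a1, b1, rfl⟩ := hy
      obtain ⟨a2, b2, rfl, hab2⟩ := (ih z).mp hz
      refine ⟨a1 + a2, b1 + b2, by push_cast; ring, ?_⟩
      simp only [Set.mem_singleton_iff, smul_eq_mul] at hy0
      have h1 : 1 ≤ a1 + b1 := by
        by_contra h
        push_neg at h
        have ha1 : a1 = 0 := by omega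
        have hb1 : b1 = 0 := by omega
        simp [ha1, hb1] at hy0
      omega
    · rintro ⟨a, b, rfl, hab⟩
      rcases Nat.eq_zero_or_pos a with rfl | ha
      · obtain ⟨c, rfl⟩ : ∃ c, b = c + 1 := ⟨b - 1, by omega⟩
        refine ⟨w, ⟨?_, by simp; omega⟩, 0 * e + c * w, ?_, by ring⟩
        · rw [hS]; exact AddSubmonoid.subset_closure (by simp)
        · exact (ih _).mpr ⟨0, c, rfl, by omega⟩
      · obtain ⟨c, rfl⟩ : ∃ c, a = c + 1 := ⟨a - 1, by omega⟩
        refine ⟨e, ⟨?_, by simp; omega⟩, c * e + b * w, ?_, by ring⟩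
        · rw [hS]; exact AddSubmonoid.subset_closure (by simp)
        · exact (ih _).mpr ⟨c, b, rfl, by omega⟩
section Main

variable (e w : ℕ) (he2 : 2 ≤ e) (hew : e < w) (hgcd : Nat.gcd e w = 1)
    (S : AddSubmonoid ℕ) (hS : S = AddSubmonoid.closure {e, w})

include he2 hew hgcd hS

theorem residue_le {a b i : ℕ} (hi : i < e)
    (h : (a * e + b * w) % e = (i * w) % e) : i ≤ b := by
  have h1 : b * w ≡ i * w [MOD e] := by
    have : (a * e + b * w) % e = (b * w) % e := by
      rw [add_comm, Nat.add_mul_mod_self_right]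
    unfold Nat.ModEq
    omega
  have h2 : b ≡ i [MOD e] := Nat.ModEq.cancel_right_of_coprime hgcd h1
  have h3 : b % e = i := by
    have := h2.symm
    unfold Nat.ModEq at this
    rw [Nat.mod_eq_of_lt hi] at this
    omega
  have := Nat.mod_le b e
  omega

theorem apery (i : ℕ) (hi : i < e) (n : ℕ) :
    sInf {k ∈ nIdeal S n | k % e = (i * w) % e} = i * w + (n - i) * e := by
  have key := nIdeal_mem e w he2 hew S hS
  have hmem : i * w + (n - i) * e ∈ {k ∈ nIdeal S n | k % e = (i * w) % e} := by
    refine ⟨(key n _).mpr ⟨n - i, i, by ring, by omega⟩, ?_⟩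
    rw [Nat.add_mul_mod_self_right]
  refine le_antisymm (Nat.sInf_le hmem) (le_csInf ⟨_, hmem⟩ ?_)
  rintro k ⟨hk, hke⟩
  obtain ⟨a, b, rfl, hab⟩ := (key n k).mp hk
  have hib : i ≤ b := residue_le e w he2 hew hgcd S hS hi hke
  obtain ⟨c, rfl⟩ : ∃ c, b = i + c := ⟨b - i, by omega⟩
  have h1 : (n - i) * e ≤ (a + c) * e := Nat.mul_le_mul_right _ (by omega)
  have h2 : c * e ≤ c * w := Nat.mul_le_mul_left _ (le_of_lt hew)
  nlinarith

end Main

theorem stmt16 (e w : ℕ) (he2 : 2 ≤ e) (hew : e < w) (hgcd : Nat.gcd e w = 1)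
    (S : AddSubmonoid ℕ) (hS : S = AddSubmonoid.closure {e, w}) :
    (nIdeal S e = (fun k => e + k) '' nIdeal S (e - 1) ∧
      ∀ s < e - 1, nIdeal S (s + 1) ≠ (fun k => e + k) '' nIdeal S s) ∧
    (∀ n : ℕ, sInf {k ∈ nIdeal S n | k % e = 0} = n * e) ∧
    (∀ i, 1 ≤ i → i ≤ e - 1 → ∀ n : ℕ,
      (n ≤ i → sInf {k ∈ nIdeal S n | k % e = (i * w) % e} = i * w) ∧
      (i ≤ n → sInf {k ∈ nIdeal S n | k % e = (i * w) % e} = i * w + (n - i) * e)) := by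
  have key := nIdeal_mem e w he2 hew S hS
  refine ⟨⟨?_, ?_⟩, ?_, ?_⟩
  · ext x
    simp only [Set.mem_image]
    constructor
    · intro hx
      obtain ⟨a, b, rfl, hab⟩ := (key e _).mp hx
      rcases Nat.eq_zero_or_pos a with rfl | ha
      · obtain ⟨c, rfl⟩ : ∃ c, b = e + c := ⟨b - e, by omega⟩
        obtain ⟨d, hw⟩ : ∃ d, w = d + 1 := ⟨w - 1, by omega⟩
        refine ⟨d * e + c * w, (key _ _).mpr ⟨d, c, rfl, by omega⟩, ?_⟩
        subst hw; ring
      · obtain ⟨c, rfl⟩ : ∃ c, a = c + 1 := ⟨a - 1, by omega⟩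
        exact ⟨c * e + b * w, (key _ _).mpr ⟨c, b, rfl, by omega⟩, by ring⟩
    · rintro ⟨y, hy, rfl⟩
      obtain ⟨a, b, rfl, hab⟩ := (key _ _).mp hy
      exact (key _ _).mpr ⟨a + 1, b, by ring, by omega⟩
  · intro s hs hcontra
    have hmem : (s + 1) * w ∈ nIdeal S (s + 1) :=
      (key _ _).mpr ⟨0, s + 1, by ring, by omega⟩
    rw [hcontra] at hmem
    obtain ⟨y, hy, hxy⟩ := hmem
    obtain ⟨a, b, rfl, hab⟩ := (key _ _).mp hy
    simp only at hxy
    have hmod : (a * e + b * w) % e = ((s + 1) * w) % e := by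
      have : e + (a * e + b * w) = (s + 1) * w := hxy
      have h2 : ((a + 1) * e + b * w) % e = ((s + 1) * w) % e := by
        rw [show (a + 1) * e + b * w = e + (a * e + b * w) by ring, this]
      rwa [show (a + 1) * e + b * w = a * e + b * w + e by ring,
        Nat.add_mod_right] at h2
    have hb : s + 1 ≤ b := residue_le e w he2 hew hgcd S hS (by omega) hmod
    have h3 : (s + 1) * w ≤ b * w := Nat.mul_le_mul_right _ hb
    omega
  · intro n
    have h := apery e w he2 hew hgcd S hS 0 (by omega) n
    simpa using h
  · intro i hi1 hie n
    constructor
    · intro hni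
      have h := apery e w he2 hew hgcd S hS i (by omega) n
      rw [Nat.sub_eq_zero_of_le hni] at h
      simpa using h
    · intro _
      exact apery e w he2 hew hgcd S hS i (by omega) n
end

section
/- Let (A, m) be a one-dimensional Cohen-Macaulay local ring with infinite residue field, reduction number r, minimal reduction xA, and first neighborhood ring A' = A[m/x]. Then A' = ∪_{n≥0} (m^n :_{Ā} m^n) = (m^r :_{Ā} m^r), where Ā is the integral closure of A in its total ring of fractions. -/
open IsLocalRing Ideal Submodule

section Aux
variable {A : Type*} [CommRing A] [IsLocalRing A]

/-- Every element of `A' = A[m/x]` can be written as `a / x^n` with `a ∈ m^n`. -/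
theorem firstNbhd_subset_T (x : A) (hx : x ∈ maximalIdeal A) {z : FractionRing A}
    (hz : z ∈ firstNbhd A x) :
    ∃ n : ℕ, ∃ a ∈ maximalIdeal A ^ n,
      z * (algebraMap A (FractionRing A) x) ^ n = algebraMap A (FractionRing A) a := by
  set f := algebraMap A (FractionRing A) with hf
  have shift : ∀ (w : FractionRing A) (n k : ℕ), ∀ a ∈ maximalIdeal A ^ n,
      w * f x ^ n = f a → ∃ b ∈ maximalIdeal A ^ (n + k), w * f x ^ (n + k) = f b := by
    intro w n k a ha hwa
    refine ⟨a * x ^ k, pow_add (maximalIdeal A) n k ▸ Ideal.mul_mem_mul ha (Ideal.pow_mem_pow hx k), ?_⟩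
    rw [pow_add, ← mul_assoc, hwa, _root_.map_mul, map_pow]
  let T : Subalgebra A (FractionRing A) :=
  { carrier := {w | ∃ n : ℕ, ∃ a ∈ maximalIdeal A ^ n, w * f x ^ n = f a}
    mul_mem' := by
      rintro w v ⟨n, a, ha, hwa⟩ ⟨m, b, hb, hvb⟩
      refine ⟨n + m, a * b, pow_add (maximalIdeal A) n m ▸ Ideal.mul_mem_mul ha hb, ?_⟩
      rw [pow_add, _root_.map_mul, ← hwa, ← hvb]; ring
    one_mem' := ⟨0, 1, by simp⟩
    add_mem' := by
      rintro w v ⟨n, a, ha, hwa⟩ ⟨m, b, hb, hvb⟩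
      obtain ⟨a', ha', hwa'⟩ := shift w n m a ha hwa
      obtain ⟨b', hb', hvb'⟩ := shift v m n b hb hvb
      rw [Nat.add_comm m n] at hb' hvb'
      exact ⟨n + m, a' + b', Ideal.add_mem _ ha' hb', by rw [add_mul, hwa', hvb', map_add]⟩
    zero_mem' := ⟨0, 0, by simp⟩
    algebraMap_mem' := fun a => ⟨0, a, by simp [hf]⟩ }
  have : firstNbhd A x ≤ T := by
    apply Algebra.adjoin_le
    rintro q ⟨a, ha, hqa⟩
    exact ⟨1, a, by rwa [pow_one], by rwa [pow_one]⟩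
  exact this hz

/-- Conversely, any `a / x^n` with `a ∈ m^n` lies in `A'`. -/
theorem T_subset_firstNbhd (x : A) (hreg : x ∈ nonZeroDivisors A)
    {n : ℕ} {a : A} (ha : a ∈ maximalIdeal A ^ n) {z : FractionRing A}
    (hz : z * (algebraMap A (FractionRing A) x) ^ n = algebraMap A (FractionRing A) a) :
    z ∈ firstNbhd A x := by
  set f := algebraMap A (FractionRing A) with hf
  have hxu : IsUnit (f x) := IsLocalization.map_units (FractionRing A) ⟨x, hreg⟩
  set u := hxu.unit with hu
  have huv : (u : FractionRing A) = f x := rfl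
  have key : ∀ m : ℕ, ∀ b ∈ maximalIdeal A ^ m,
      f b * ((↑u⁻¹ : FractionRing A)) ^ m ∈ firstNbhd A x := by
    intro m
    induction m with
    | zero => intro b _; rw [pow_zero, mul_one]; exact Subalgebra.algebraMap_mem (firstNbhd A x) b
    | succ m ih =>
      intro b hb
      rw [pow_succ] at hb
      refine Submodule.mul_induction_on (C := fun w =>
          f w * ((↑u⁻¹ : FractionRing A)) ^ (m + 1) ∈ firstNbhd A x) hb ?_ ?_
      · intro c hc d hd
        have h1 : f c * ((↑u⁻¹ : FractionRing A)) ^ m ∈ firstNbhd A x := ih c hc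
        have h2 : f d * (↑u⁻¹ : FractionRing A) ∈ firstNbhd A x := by
          apply Algebra.subset_adjoin
          refine ⟨d, hd, ?_⟩
          rw [mul_assoc, ← huv, Units.inv_mul, mul_one]
        have := mul_mem h1 h2
        convert this using 1
        rw [_root_.map_mul, pow_succ]; ring
      · intro c d h1 h2
        have := add_mem h1 h2
        convert this using 1
        rw [_root_.map_add, add_mul]
  have hz' : z = f a * ((↑u⁻¹ : FractionRing A)) ^ n := by
    have : z * (f x) ^ n * ((↑u⁻¹ : FractionRing A)) ^ n = f a * ((↑u⁻¹ : FractionRing A)) ^ n := by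
      rw [hz]
    rw [mul_assoc, ← mul_pow, ← huv, Units.mul_inv, one_pow, mul_one] at this
    exact this
  rw [hz']
  exact key n a ha

end Aux

section Aux2
variable {A : Type*} [CommRing A] [IsLocalRing A]

theorem pow_reduction {x : A} {r : ℕ}
    (hred : maximalIdeal A ^ (r + 1) = Ideal.span {x} * maximalIdeal A ^ r) (k : ℕ) :
    maximalIdeal A ^ (r + k) = Ideal.span {x} ^ k * maximalIdeal A ^ r := by
  induction k with
  | zero => simp
  | succ k ih =>
    have : maximalIdeal A ^ (r + (k + 1)) = maximalIdeal A ^ (r + k) * maximalIdeal A := by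
      rw [← pow_succ]; ring_nf
    rw [this, ih, mul_assoc, mul_comm (maximalIdeal A ^ r) (maximalIdeal A), ← pow_succ', hred, pow_succ]
    ring

/-- if `z = a / x^n` with `a ∈ m^n` then `z · m^r ⊆ m^r`. -/
theorem stable_of_T {x : A} (hreg : x ∈ nonZeroDivisors A) {r : ℕ}
    (hred : maximalIdeal A ^ (r + 1) = Ideal.span {x} * maximalIdeal A ^ r)
    {n : ℕ} {a : A} (ha : a ∈ maximalIdeal A ^ n) {z : FractionRing A}
    (hz : z * (algebraMap A (FractionRing A) x) ^ n = algebraMap A (FractionRing A) a)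
    {b : A} (hb : b ∈ maximalIdeal A ^ r) :
    z * algebraMap A (FractionRing A) b ∈
      algebraMap A (FractionRing A) '' ((maximalIdeal A ^ r : Ideal A) : Set A) := by
  set f := algebraMap A (FractionRing A) with hf
  have hxu : IsUnit (f x ^ n) := (IsLocalization.map_units (FractionRing A)
    (⟨x, hreg⟩ : nonZeroDivisors A)).pow n
  have hab : a * b ∈ Ideal.span {x ^ n} * maximalIdeal A ^ r := by
    rw [← Ideal.span_singleton_pow, ← pow_reduction hred n, Nat.add_comm r n, pow_add]
    exact Ideal.mul_mem_mul ha hb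
  obtain ⟨c, hc, hcab⟩ := Ideal.mem_span_singleton_mul.mp hab
  refine ⟨c, hc, ?_⟩
  apply hxu.mul_right_cancel
  have h1 : z * f b * f x ^ n = f (a * b) := by
    rw [mul_comm z (f b), mul_assoc, hz, ← _root_.map_mul, mul_comm b a]
  have h2 : f c * f x ^ n = f (a * b) := by
    rw [← map_pow, ← _root_.map_mul, mul_comm c (x ^ n), hcab]
  rw [h1, h2]

/-- `z · m^r ⊆ m^r` implies `z` integral over `A`. -/
theorem integral_of_stable {x : A} (hx : x ∈ maximalIdeal A) (hreg : x ∈ nonZeroDivisors A) {r : ℕ}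
    [IsNoetherianRing A] {z : FractionRing A}
    (hst : ∀ b ∈ maximalIdeal A ^ r, z * algebraMap A (FractionRing A) b ∈
      algebraMap A (FractionRing A) '' ((maximalIdeal A ^ r : Ideal A) : Set A)) :
    z ∈ integralClosure A (FractionRing A) := by
  set f := algebraMap A (FractionRing A) with hf
  set N : Submodule A (FractionRing A) := Submodule.map (Algebra.linearMap A (FractionRing A))
    ((maximalIdeal A ^ r : Ideal A) : Submodule A A) with hN
  have hmemN : ∀ b ∈ maximalIdeal A ^ r, f b ∈ N := fun b hb => ⟨b, hb, rfl⟩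
  have hNmem : ∀ v ∈ N, ∃ b ∈ maximalIdeal A ^ r, f b = v := by
    rintro v ⟨b, hb, rfl⟩; exact ⟨b, hb, rfl⟩
  have hNfg : N.FG := Submodule.FG.map _ (IsNoetherian.noetherian _)
  have hxr : IsUnit (f (x ^ r)) := by
    rw [map_pow]
    exact (IsLocalization.map_units (FractionRing A) (⟨x, hreg⟩ : nonZeroDivisors A)).pow r
  -- the subalgebra of multipliers of N
  let S : Subalgebra A (FractionRing A) :=
  { carrier := {w | ∀ v ∈ N, w * v ∈ N}
    mul_mem' := fun {a b} ha hb v hv => by rw [mul_assoc]; exact ha _ (hb _ hv)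
    one_mem' := fun v hv => by rwa [one_mul]
    add_mem' := fun {a b} ha hb v hv => by rw [add_mul]; exact N.add_mem (ha _ hv) (hb _ hv)
    zero_mem' := fun v hv => by rw [zero_mul]; exact N.zero_mem
    algebraMap_mem' := fun c v hv => by
      rw [← Algebra.smul_def]; exact N.smul_mem c hv }
  have hzS : z ∈ S := by
    intro v hv
    obtain ⟨b, hb, rfl⟩ := hNmem v hv
    obtain ⟨c, hc, hc'⟩ := hst b hb
    rw [← hc']
    exact hmemN c hc
  -- S is contained in (f (x^r))⁻¹ • N, which is f.g.
  let c : FractionRing A := ↑hxr.unit⁻¹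
  let N₂ : Submodule A (FractionRing A) := Submodule.map (LinearMap.mulLeft A c) N
  have hN₂fg : N₂.FG := hNfg.map _
  have hSle : Subalgebra.toSubmodule S ≤ N₂ := by
    intro w hw
    have hw' : ∀ v ∈ N, w * v ∈ N := hw
    have h1 : w * f (x ^ r) ∈ N := hw' _ (hmemN _ (Ideal.pow_mem_pow hx r))
    refine ⟨w * f (x ^ r), h1, ?_⟩
    show c * (w * f (x ^ r)) = w
    rw [mul_comm w (f (x ^ r)), ← mul_assoc]
    have : c * f (x ^ r) = 1 := hxr.unit.inv_mul
    rw [this, one_mul]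
  have : IsNoetherian A N₂ := isNoetherian_of_fg_of_noetherian N₂ hN₂fg
  have hSfg : (Subalgebra.toSubmodule S).FG := by
    have heq : Submodule.map N₂.subtype (Submodule.comap N₂.subtype
        (Subalgebra.toSubmodule S)) = Subalgebra.toSubmodule S := by
      rw [Submodule.map_comap_subtype]
      exact inf_eq_right.mpr hSle
    rw [← heq]
    exact Submodule.FG.map _ (IsNoetherian.noetherian _)
  exact IsIntegral.of_mem_of_fg S hSfg z hzS

end Aux2

theorem stable_mem_firstNbhd' {A : Type*} [CommRing A] [IsLocalRing A]
    {x : A} (hx : x ∈ maximalIdeal A) (hreg : x ∈ nonZeroDivisors A) {n : ℕ}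
    {z : FractionRing A}
    (hst : ∀ a ∈ maximalIdeal A ^ n, z * algebraMap A (FractionRing A) a ∈
      algebraMap A (FractionRing A) '' ((maximalIdeal A ^ n : Ideal A) : Set A)) :
    z ∈ firstNbhd A x := by
  obtain ⟨c, hc, hc'⟩ := hst (x ^ n) (Ideal.pow_mem_pow hx n)
  refine T_subset_firstNbhd x hreg hc ?_
  rw [map_pow] at hc'
  exact hc'.symm


theorem stmt19 {A : Type*} [CommRing A] [IsLocalRing A] [IsNoetherianRing A]
    [Infinite (IsLocalRing.ResidueField A)]
    (hdim : ringKrullDim A = 1)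
    (x : A) (hx : x ∈ maximalIdeal A) (hreg : x ∈ nonZeroDivisors A)
    (r : ℕ)
    (hred : maximalIdeal A ^ (r + 1) = Ideal.span {x} * maximalIdeal A ^ r)
    (hrmin : ∀ s < r, maximalIdeal A ^ (s + 1) ≠ Ideal.span {x} * maximalIdeal A ^ s) :
    ((firstNbhd A x : Subalgebra A (FractionRing A)) : Set (FractionRing A))
        = ⋃ n : ℕ, {z : FractionRing A | z ∈ integralClosure A (FractionRing A) ∧
            ∀ a ∈ maximalIdeal A ^ n, z * algebraMap A (FractionRing A) a ∈
              algebraMap A (FractionRing A) '' ((maximalIdeal A ^ n : Ideal A) : Set A)} ∧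
    ((firstNbhd A x : Subalgebra A (FractionRing A)) : Set (FractionRing A))
        = {z : FractionRing A | z ∈ integralClosure A (FractionRing A) ∧
            ∀ a ∈ maximalIdeal A ^ r, z * algebraMap A (FractionRing A) a ∈
              algebraMap A (FractionRing A) '' ((maximalIdeal A ^ r : Ideal A) : Set A)} := by
  -- A' ⊆ C_r
  have hsub : ((firstNbhd A x : Subalgebra A (FractionRing A)) : Set (FractionRing A))
      ⊆ {z : FractionRing A | z ∈ integralClosure A (FractionRing A) ∧
          ∀ a ∈ maximalIdeal A ^ r, z * algebraMap A (FractionRing A) a ∈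
            algebraMap A (FractionRing A) '' ((maximalIdeal A ^ r : Ideal A) : Set A)} := by
    intro z hz
    obtain ⟨n, a, ha, hza⟩ := firstNbhd_subset_T x hx hz
    have hst : ∀ b ∈ maximalIdeal A ^ r, z * algebraMap A (FractionRing A) b ∈
        algebraMap A (FractionRing A) '' ((maximalIdeal A ^ r : Ideal A) : Set A) :=
      fun b hb => stable_of_T hreg hred ha hza hb
    exact ⟨integral_of_stable hx hreg hst, hst⟩
  have h2 : ((firstNbhd A x : Subalgebra A (FractionRing A)) : Set (FractionRing A))
      = {z : FractionRing A | z ∈ integralClosure A (FractionRing A) ∧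
          ∀ a ∈ maximalIdeal A ^ r, z * algebraMap A (FractionRing A) a ∈
            algebraMap A (FractionRing A) '' ((maximalIdeal A ^ r : Ideal A) : Set A)} := by
    apply Set.Subset.antisymm hsub
    intro z hz
    exact stable_mem_firstNbhd' hx hreg hz.2
  refine ⟨?_, h2⟩
  apply Set.Subset.antisymm
  · intro z hz
    exact Set.mem_iUnion.mpr ⟨r, hsub hz⟩
  · intro z hz
    obtain ⟨n, hn⟩ := Set.mem_iUnion.mp hz
    exact stable_mem_firstNbhd' hx hreg hn.2
end
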